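/- arXiv:2103.03965 — 6 statements merged into one kernel-verified Lean document; each statement's English description precedes it below -/
import Mathlib

section
/- Let n ≥ 2 be an integer and let p be a real number with 1 − (1/2)^(1/n) ≤ p ≤ 1/2. Then for μ_p^{⊗n}-almost every tuple (x₁, …, xₙ) ∈ (3^ω)ⁿ (product of n copies of μ_p), the intersection ⋂_{i=1}^{n} [T_{xᵢ}] is empty. -/
open MeasureTheory

/-- The list of children of node `τ` produced by code symbol `i`:
`0` gives only the left child, `1` only the right child, `2` both. -/
def children (τ : List Bool) (i : Fin 3) : List (List Bool) :=
  if i = 0 then [τ ++ [false]]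
  else if i = 1 then [τ ++ [true]]
  else [τ ++ [false], τ ++ [true]]

/-- `levels x n = (L, c)` where `L` is the list of nodes of the coded tree `T_x` at level `n`,
in lexicographic order, and `c` is the number of code symbols of `x` consumed by levels `< n`.
Processing nodes level by level in lexicographic order is exactly length-lexicographic order. -/
def levels (x : ℕ → Fin 3) : ℕ → List (List Bool) × ℕ
  | 0 => ([[]], 0)
  | n + 1 =>
    let p := levels x n
    ((p.1.zipIdx.map fun q => children q.1 (x (p.2 + q.2))).flatten, p.2 + p.1.length)

/-- The subtree `T_x ⊆ 2^{<ω}` (with no dead ends) coded by `x ∈ 3^ω`. -/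
def treeOf (x : ℕ → Fin 3) : Set (List Bool) :=
  {σ | σ ∈ (levels x σ.length).1}

/-- `[T]`, the set of infinite paths through a set `T` of finite binary strings. -/
def pathsOf (T : Set (List Bool)) : Set (ℕ → Bool) :=
  {y | ∀ n : ℕ, (List.ofFn fun i : Fin n => y i) ∈ T}

/-- One-coordinate Bernoulli probabilities: `0 ↦ p`, `1 ↦ q`, `2 ↦ 1 - p - q`. -/
def bern3 (p q : ℝ) (i : Fin 3) : ℝ :=
  if i = 0 then p else if i = 1 then q else 1 - p - q

/-- `μ` is the Bernoulli product measure `μ_{⟨p,q⟩}` on `3^ω`: it is a probability measure whose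
coordinates are i.i.d. with distribution `bern3 p q`, as expressed by its values on cylinders. -/
def IsBernoulliMeasure (p q : ℝ) (μ : Measure (ℕ → Fin 3)) : Prop :=
  IsProbabilityMeasure μ ∧
    ∀ σ : List (Fin 3),
      μ {x | ∀ i : Fin σ.length, x i = σ.get i} =
        ENNReal.ofReal ((σ.map (bern3 p q)).prod)


/-!
Cutting `treeOf x` at depth `k` gives a finite pruned tree `t` whose level-by-level code is an
initial segment of `x`, so the cylinder of `code t` has `μ_{⟨p,q⟩}`-measure `weight p q t`, a
product of one factor `p`, `q` or `1 - p - q` per node. Under these weights the root symbol and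
the two subtrees of a tree of height `k + 1` are independent. A tuple of trees shares a branch
of height `k + 1` iff no root symbol is `1` and the left subtrees share a branch of height `k`,
or no root symbol is `0` and the right subtrees do. By inclusion–exclusion, the weight `u k` of
the tuples of `n` trees sharing a branch of height `k` therefore satisfies `u 0 = 1` and
`u (k + 1) = 2 (1 - p)ⁿ u k - (1 - 2p)ⁿ (u k)²`. When `2 (1 - p)ⁿ ≤ 1`, which is the hypothesis
`1 - (1/2)^(1/n) ≤ p`, this forces `u k ≤ 1 / (1 + k (1 - 2p)ⁿ)` for `p < 1/2` and
`u k ≤ 2^((1 - n) k)` for `p = 1/2`. Either way `u k → 0`, and `u k` bounds the measure of the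
tuples whose trees have a common path.
-/

open MeasureTheory Filter Topology

lemma List.prod_map_flatMap_append {α β M : Type*} [CommMonoid M] (f : α → M)
    (A B : β → List α) (l : List β) :
    ((l.flatMap fun j => A j ++ B j).map f).prod
      = ((l.flatMap A).map f).prod * ((l.flatMap B).map f).prod := by
  induction l with
  | nil => simp
  | cons j l ih => simp only [List.flatMap_cons, List.map_append, List.prod_append, ih]; ac_rfl

section ProductWeights

variable {ι α β γ : Type*} [Fintype ι] [DecidableEq ι] [Fintype α] [Fintype β] [Fintype γ]

/-- If the weight `w` is the image of `v` under `m`, then so are the product weights on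
`ι`-tuples. -/
lemma sum_prod_mul_eq_sum_prod_mul_comp {w : α → ℝ} {v : β → ℝ} {m : β → α}
    (h : ∀ F : α → ℝ, ∑ a, w a * F a = ∑ c, v c * F (m c)) (G : (ι → α) → ℝ) :
    ∑ T : ι → α, (∏ i, w (T i)) * G T
      = ∑ C : ι → β, (∏ i, v (C i)) * G (m ∘ C) := by
  classical
  have hfiber (a : α) : ∑ c with m c = a, v c = w a := by
    simpa [Finset.sum_filter] using (h fun a' => if a' = a then 1 else 0).symm
  have hprod (T : ι → α) : ∑ C with m ∘ C = T, ∏ i, v (C i) = ∏ i, w (T i) := by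
    have : ({C | m ∘ C = T} : Finset (ι → β))
        = Fintype.piFinset fun i => {c | m c = T i} := by
      ext C
      simp [funext_iff]
    rw [this, ← Finset.prod_univ_sum]
    exact Finset.prod_congr rfl fun i _ => hfiber (T i)
  rw [← Finset.sum_fiberwise Finset.univ (m ∘ ·)]
  refine Finset.sum_congr rfl fun T _ => ?_
  rw [← hprod, Finset.sum_mul]
  exact Finset.sum_congr rfl fun C hC => by rw [(Finset.mem_filter.1 hC).2]

lemma sum_prod_mul_indicator_univ_pi (w : α → ℝ) (S : Set α) :
    ∑ s : ι → α, (∏ i, w (s i)) * (Set.univ.pi fun _ => S).indicator 1 s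
      = (∑ a, S.indicator w a) ^ Fintype.card ι := by
  rw [← Finset.card_univ, ← Finset.prod_const, Fintype.prod_sum]
  refine Finset.sum_congr rfl fun s _ => ?_
  rw [← Finset.coe_univ, Set.indicator_pi_one_apply, ← Finset.prod_mul_distrib]
  exact Finset.prod_congr rfl fun i _ => by by_cases h : s i ∈ S <;> simp [h]

lemma sum_prod_triple (u : α → ℝ) (v : β → ℝ) (w : γ → ℝ) (F : (ι → α) → ℝ)
    (G : (ι → β) → ℝ) (H : (ι → γ) → ℝ) :
    ∑ C : ι → α × β × γ, (∏ i, u (C i).1 * (v (C i).2.1 * w (C i).2.2)) *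
        (F (fun i => (C i).1) * G (fun i => (C i).2.1) * H (fun i => (C i).2.2))
      = (∑ s, (∏ i, u (s i)) * F s) * (∑ A, (∏ i, v (A i)) * G A) *
          ∑ B, (∏ i, w (B i)) * H B := by
  let e := (Equiv.arrowProdEquivProdArrow ι (fun _ => α) fun _ => β × γ).trans
    ((Equiv.refl _).prodCongr (Equiv.arrowProdEquivProdArrow ι (fun _ => β) fun _ => γ))
  rw [← e.symm.sum_comp, Fintype.sum_prod_type, Finset.sum_mul_sum, Finset.sum_mul_sum]
  refine Finset.sum_congr rfl fun s _ => ?_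
  simp only [Fintype.sum_prod_type, Finset.sum_mul]
  rw [Finset.sum_comm]
  refine Finset.sum_congr rfl fun c _ => Finset.sum_congr rfl fun b _ => ?_
  change (∏ i, u (s i) * (v (b i) * w (c i))) * (F s * G b * H c) = _
  simp only [Finset.prod_mul_distrib]
  ring

end ProductWeights

section Recurrence

variable {a b : ℝ} {u : ℕ → ℝ}

lemma recurrence_mem_Icc (hb : 0 ≤ b) (hba : b ≤ a) (ha : a ≤ 1) (h0 : u 0 = 1)
    (hu : ∀ k, u (k + 1) = a * u k - b * u k ^ 2) (k : ℕ) : u k ∈ Set.Icc 0 1 := by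
  induction k with
  | zero => simp [h0]
  | succ k ih =>
    obtain ⟨h0, h1⟩ := ih
    rw [hu]
    constructor <;> nlinarith [mul_le_mul_of_nonneg_left h1 hb]

lemma tendsto_zero_of_recurrence (hb : 0 ≤ b) (hba : b ≤ a) (ha : a ≤ 1)
    (hab : 0 < b ∨ a < 1) (h0 : u 0 = 1) (hu : ∀ k, u (k + 1) = a * u k - b * u k ^ 2) :
    Tendsto u atTop (𝓝 0) := by
  have hIcc := recurrence_mem_Icc hb hba ha h0 hu
  rcases hab with hb | ha
  · have hle (k : ℕ) : u k ≤ 1 / (1 + k * b) := by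
      induction k with
      | zero => simp [h0]
      | succ k ih =>
        obtain ⟨h0, h1⟩ := hIcc k
        have hbu : 0 ≤ 1 - b * u k := by nlinarith
        rw [le_div_iff₀ (by positivity)] at ih
        rw [hu, le_div_iff₀ (by positivity), Nat.cast_succ]
        calc (a * u k - b * u k ^ 2) * (1 + (k + 1) * b)
            ≤ u k * (1 - b * u k) * (1 + (k + 1) * b) := by gcongr; nlinarith
          _ = u k * (1 + k * b) * (1 - b * u k) + b * u k * (1 - b * u k) := by ring
          _ ≤ 1 * (1 - b * u k) + b * u k * (1 - b * u k) := by gcongr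
          _ ≤ 1 := by nlinarith [sq_nonneg (b * u k)]
    refine squeeze_zero (fun k => (hIcc k).1) hle ?_
    simp only [one_div]
    exact (tendsto_atTop_add_const_left _ 1
      (tendsto_natCast_atTop_atTop.atTop_mul_const hb)).inv_tendsto_atTop
  · have hle (k : ℕ) : u k ≤ a ^ k := by
      induction k with
      | zero => simp [h0]
      | succ k ih =>
        rw [hu]
        calc a * u k - b * u k ^ 2 ≤ a * u k := by nlinarith [sq_nonneg (u k)]
          _ ≤ a * a ^ k := by gcongr; exact hb.trans hba
          _ = a ^ (k + 1) := (pow_succ' a k).symm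
    exact squeeze_zero (fun k => (hIcc k).1) hle
      (tendsto_pow_atTop_nhds_zero_of_lt_one (hb.trans hba) ha)

end Recurrence

def prefixCylinder (σ : List (Fin 3)) : Set (ℕ → Fin 3) :=
  {x | (List.range σ.length).map x = σ}

lemma map_range_eq_of_mem_prefixCylinder {σ τ : List (Fin 3)} {x : ℕ → Fin 3}
    (hx : x ∈ prefixCylinder τ) (hστ : σ <+: τ) : (List.range σ.length).map x = σ :=
  calc (List.range σ.length).map x = ((List.range τ.length).map x).take σ.length := by
        rw [← List.map_take, List.take_range, min_eq_left hστ.length_le]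
    _ = σ := by rw [hx, ← List.prefix_iff_eq_take.1 hστ]

lemma measure_prefixCylinder {p q : ℝ} {μ : Measure (ℕ → Fin 3)}
    (hμ : IsBernoulliMeasure p q μ) (σ : List (Fin 3)) :
    μ (prefixCylinder σ) = ENNReal.ofReal ((σ.map (bern3 p q)).prod) := by
  rw [← hμ.2 σ]
  congr 1
  ext x
  simp [prefixCylinder, List.ext_getElem_iff, Fin.forall_iff]

lemma levels_succ (x : ℕ → Fin 3) (j : ℕ) :
    levels x (j + 1) =
      ((List.zipWith children (levels x j).1
          ((List.range (levels x j).1.length).map fun i => x ((levels x j).2 + i))).flatten,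
        (levels x j).2 + (levels x j).1.length) := by
  rw [levels, List.zipWith_map_right, List.zipIdx_eq_zip_range', ← List.range_eq_range',
    List.map_zip_eq_zipWith]
  rfl

lemma children_cons (c : Bool) (τ : List Bool) (s : Fin 3) :
    children (c :: τ) s = (children τ s).map (c :: ·) := by
  fin_cases s <;> simp [children]

lemma flatten_zipWith_children_map_cons (c : Bool) (L : List (List Bool)) (S : List (Fin 3)) :
    (List.zipWith children (L.map (c :: ·)) S).flatten
      = (List.zipWith children L S).flatten.map (c :: ·) := by
  induction L generalizing S with
  | nil => simp
  | cons σ L ih => cases S <;> simp [children_cons, ih]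

/-- The trees `treeOf x` cut at depth `k`: every node above depth `k` has a left child, a right
child, or both. -/
inductive PrunedTree : ℕ → Type
  | leaf : PrunedTree 0
  | left {k : ℕ} : PrunedTree k → PrunedTree (k + 1)
  | right {k : ℕ} : PrunedTree k → PrunedTree (k + 1)
  | both {k : ℕ} : PrunedTree k → PrunedTree k → PrunedTree (k + 1)

namespace PrunedTree

def succEquiv (k : ℕ) :
    PrunedTree (k + 1) ≃ PrunedTree k ⊕ PrunedTree k ⊕ PrunedTree k × PrunedTree k where
  toFun
    | left a => .inl a
    | right a => .inr (.inl a)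
    | both a b => .inr (.inr (a, b))
  invFun
    | .inl a => left a
    | .inr (.inl a) => right a
    | .inr (.inr (a, b)) => both a b
  left_inv t := by cases t <;> rfl
  right_inv c := by rcases c with a | a | ⟨a, b⟩ <;> rfl

instance instFintype : ∀ k, Fintype (PrunedTree k)
  | 0 => ⟨{leaf}, fun t => by cases t; simp⟩
  | k + 1 => letI := instFintype k; Fintype.ofEquiv _ (succEquiv k).symm

lemma eq_leaf (t : PrunedTree 0) : t = leaf := by
  cases t
  rfl

lemma sum_zero {M : Type*} [AddCommMonoid M] (f : PrunedTree 0 → M) : ∑ t, f t = f leaf :=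
  Finset.sum_singleton f leaf

lemma sum_succ {M : Type*} [AddCommMonoid M] {k : ℕ} (f : PrunedTree (k + 1) → M) :
    ∑ t, f t = ∑ a, f (left a) + (∑ a, f (right a) + ∑ c : PrunedTree k × PrunedTree k,
      f (both c.1 c.2)) := by
  rw [← (succEquiv k).symm.sum_comp, Fintype.sum_sum_type, Fintype.sum_sum_type]
  rfl

/-- The tree whose root carries the code symbol `s`; the subtree that `s` does not use is
dropped. -/
def node {k : ℕ} (s : Fin 3) (a b : PrunedTree k) : PrunedTree (k + 1) :=
  if s = 0 then left a else if s = 1 then right b else both a b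

def nodesAt : ∀ {k}, PrunedTree k → ℕ → List (List Bool)
  | _, _, 0 => [[]]
  | _, leaf, _ + 1 => []
  | _, left a, j + 1 => (nodesAt a j).map (false :: ·)
  | _, right a, j + 1 => (nodesAt a j).map (true :: ·)
  | _, both a b, j + 1 => (nodesAt a j).map (false :: ·) ++ (nodesAt b j).map (true :: ·)

def symbolsAt : ∀ {k}, PrunedTree k → ℕ → List (Fin 3)
  | _, leaf, _ => []
  | _, left _, 0 => [0]
  | _, right _, 0 => [1]
  | _, both _ _, 0 => [2]
  | _, left a, j + 1 => symbolsAt a j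
  | _, right a, j + 1 => symbolsAt a j
  | _, both a b, j + 1 => symbolsAt a j ++ symbolsAt b j

def code {k : ℕ} (t : PrunedTree k) : List (Fin 3) := (List.range k).flatMap (symbolsAt t)

def offset {k : ℕ} (t : PrunedTree k) (j : ℕ) : ℕ :=
  ((List.range j).flatMap (symbolsAt t)).length

lemma nodesAt_zero {k : ℕ} (t : PrunedTree k) : nodesAt t 0 = [[]] := by
  cases t <;> rfl

lemma length_nodesAt {k : ℕ} (t : PrunedTree k) {j : ℕ} (hj : j < k) :
    (nodesAt t j).length = (symbolsAt t j).length := by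
  induction t generalizing j with
  | leaf => omega
  | left a ih | right a ih =>
    cases j with
    | zero => rfl
    | succ j => simpa [nodesAt, symbolsAt] using ih (by omega)
  | both a b iha ihb =>
    cases j with
    | zero => rfl
    | succ j => simp [nodesAt, symbolsAt, iha (j := j) (by omega), ihb (j := j) (by omega)]

lemma flatten_zipWith_children_nodesAt {k : ℕ} (t : PrunedTree k) {j : ℕ} (hj : j < k) :
    (List.zipWith children (nodesAt t j) (symbolsAt t j)).flatten = nodesAt t (j + 1) := by
  induction t generalizing j with
  | leaf => omega
  | left a ih | right a ih =>
    cases j with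
    | zero => simp [nodesAt, symbolsAt, children]
    | succ j =>
      rw [nodesAt, symbolsAt, flatten_zipWith_children_map_cons, ih (by omega), nodesAt]
  | both a b iha ihb =>
    cases j with
    | zero => simp [nodesAt, symbolsAt, children]
    | succ j =>
      rw [nodesAt, symbolsAt, List.zipWith_append (by simp [length_nodesAt a (by omega : j < _)]),
        List.flatten_append, flatten_zipWith_children_map_cons, flatten_zipWith_children_map_cons,
        iha (by omega), ihb (by omega), nodesAt]

lemma offset_succ {k : ℕ} (t : PrunedTree k) (j : ℕ) :
    offset t (j + 1) = offset t j + (symbolsAt t j).length := by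
  simp [offset, List.range_succ]

lemma prefix_code {k : ℕ} (t : PrunedTree k) {j : ℕ} (hj : j < k) :
    (List.range j).flatMap (symbolsAt t) ++ symbolsAt t j <+: code t := by
  obtain ⟨m, rfl⟩ := Nat.exists_eq_add_of_le hj
  rw [code, List.range_add, List.flatMap_append, List.range_succ, List.flatMap_append]
  simp

lemma symbolsAt_eq_of_mem_prefixCylinder {k : ℕ} {t : PrunedTree k} {x : ℕ → Fin 3}
    (hx : x ∈ prefixCylinder (code t)) {j : ℕ} (hj : j < k) :
    (List.range (symbolsAt t j).length).map (fun i => x (offset t j + i)) = symbolsAt t j := by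
  have h := map_range_eq_of_mem_prefixCylinder hx (prefix_code t hj)
  rw [List.length_append, List.range_add, List.map_append, List.map_map] at h
  exact (List.append_inj h (by simp)).2

lemma levels_eq_of_mem_prefixCylinder {k : ℕ} {t : PrunedTree k} {x : ℕ → Fin 3}
    (hx : x ∈ prefixCylinder (code t)) {j : ℕ} (hj : j ≤ k) :
    levels x j = (nodesAt t j, offset t j) := by
  induction j with
  | zero => rw [levels, nodesAt_zero]; rfl
  | succ j ih =>
    rw [levels_succ, ih (by omega), length_nodesAt t (by omega),
      symbolsAt_eq_of_mem_prefixCylinder hx (by omega),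
      flatten_zipWith_children_nodesAt t (by omega), offset_succ]

def numLeaves : ∀ {k}, PrunedTree k → ℕ
  | _, leaf => 1
  | _, left a => numLeaves a
  | _, right a => numLeaves a
  | _, both a b => numLeaves a + numLeaves b

/-- Extends `t` by one level, the `i`-th leaf of `t` in lexicographic order receiving the code
symbol `σ i`. -/
def graft : ∀ {k}, PrunedTree k → (ℕ → Fin 3) → PrunedTree (k + 1)
  | _, leaf, σ => node (σ 0) leaf leaf
  | _, left a, σ => left (graft a σ)
  | _, right a, σ => right (graft a σ)
  | _, both a b, σ => both (graft a σ) (graft b fun i => σ (numLeaves a + i))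

lemma symbolsAt_graft_of_lt {k : ℕ} (t : PrunedTree k) (σ : ℕ → Fin 3) {j : ℕ}
    (hj : j < k) :
    symbolsAt (graft t σ) j = symbolsAt t j := by
  induction t generalizing σ j with
  | leaf => omega
  | left a ih | right a ih =>
    cases j with
    | zero => rfl
    | succ j => exact ih σ (by omega)
  | both a b iha ihb =>
    cases j with
    | zero => rfl
    | succ j =>
      simp only [graft, symbolsAt, iha σ (by omega : j < _), ihb _ (by omega : j < _)]

lemma symbolsAt_graft_self {k : ℕ} (t : PrunedTree k) (σ : ℕ → Fin 3) :
    symbolsAt (graft t σ) k = (List.range (numLeaves t)).map σ := by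
  induction t generalizing σ with
  | leaf =>
    change symbolsAt (node (σ 0) leaf leaf) 0 = [σ 0]
    generalize σ 0 = s
    fin_cases s <;> rfl
  | left a ih | right a ih => exact ih σ
  | both a b iha ihb =>
    simp only [graft, symbolsAt, numLeaves, iha, ihb, List.range_add, List.map_append,
      List.map_map]
    rfl

lemma code_graft {k : ℕ} (t : PrunedTree k) (σ : ℕ → Fin 3) :
    code (graft t σ) = code t ++ (List.range (numLeaves t)).map σ := by
  rw [code, code, List.range_succ, List.flatMap_append, List.flatMap_singleton,
    symbolsAt_graft_self]
  congr 1
  exact List.flatMap_congr fun j hj => symbolsAt_graft_of_lt t σ (List.mem_range.1 hj)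

def truncate (x : ℕ → Fin 3) : ∀ k, PrunedTree k
  | 0 => leaf
  | k + 1 => graft (truncate x k) fun i => x ((code (truncate x k)).length + i)

lemma mem_prefixCylinder_code_truncate (x : ℕ → Fin 3) (k : ℕ) :
    x ∈ prefixCylinder (code (truncate x k)) := by
  induction k with
  | zero => rfl
  | succ k ih =>
    change (List.range _).map x = _
    rw [truncate, code_graft, List.length_append, List.length_map, List.length_range,
      List.range_add, List.map_append, List.map_map, ih]
    rfl

section Weight

variable (p q : ℝ)

def weight : ∀ {k}, PrunedTree k → ℝ
  | _, leaf => 1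
  | _, left a => p * weight a
  | _, right a => q * weight a
  | _, both a b => (1 - p - q) * (weight a * weight b)

lemma code_left {k : ℕ} (a : PrunedTree k) : code (left a) = 0 :: code a := by
  simp [code, List.range_succ_eq_map, List.flatMap_map, symbolsAt]

lemma code_right {k : ℕ} (a : PrunedTree k) : code (right a) = 1 :: code a := by
  simp [code, List.range_succ_eq_map, List.flatMap_map, symbolsAt]

lemma code_both {k : ℕ} (a b : PrunedTree k) :
    code (both a b) = 2 :: (List.range k).flatMap fun j => symbolsAt a j ++ symbolsAt b j := by
  simp [code, List.range_succ_eq_map, List.flatMap_map, symbolsAt]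

lemma prod_map_bern3_code {k : ℕ} (t : PrunedTree k) :
    ((code t).map (bern3 p q)).prod = weight p q t := by
  induction t with
  | leaf => rfl
  | left a ih => rw [code_left, List.map_cons, List.prod_cons, ih]; rfl
  | right a ih => rw [code_right, List.map_cons, List.prod_cons, ih]; rfl
  | both a b iha ihb =>
    rw [code_both, List.map_cons, List.prod_cons, List.prod_map_flatMap_append, ← code, ← code,
      iha, ihb, weight]
    simp [bern3]

variable {p q} in
lemma weight_nonneg (hp : 0 ≤ p) (hq : 0 ≤ q) (hpq : p + q ≤ 1) {k : ℕ} (t : PrunedTree k) :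
    0 ≤ weight p q t := by
  induction t with
  | leaf => exact zero_le_one
  | left a ih => exact mul_nonneg hp ih
  | right a ih => exact mul_nonneg hq ih
  | both a b iha ihb => exact mul_nonneg (by linarith) (mul_nonneg iha ihb)

lemma sum_weight (k : ℕ) : ∑ t : PrunedTree k, weight p q t = 1 := by
  induction k with
  | zero => exact sum_zero _
  | succ k ih =>
    have h : ∑ c : PrunedTree k × PrunedTree k, weight p q (both c.1 c.2)
        = (1 - p - q) *
            ((∑ a : PrunedTree k, weight p q a) * ∑ b : PrunedTree k, weight p q b) := by
      rw [Finset.sum_mul_sum, ← Fintype.sum_prod_type', Finset.mul_sum]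
      rfl
    rw [sum_succ, h]
    simp only [weight, ← Finset.mul_sum, ih]
    ring

/-- The weight on trees of height `k + 1` is the image of `bern3 p q ⊗ weight ⊗ weight` under
`node`. -/
lemma sum_weight_mul {k : ℕ} (F : PrunedTree (k + 1) → ℝ) :
    ∑ t, weight p q t * F t
      = ∑ c : Fin 3 × PrunedTree k × PrunedTree k,
          bern3 p q c.1 * (weight p q c.2.1 * weight p q c.2.2) * F (node c.1 c.2.1 c.2.2) := by
  have sum_weight_mul_const (r : ℝ) : ∑ a : PrunedTree k, weight p q a * r = r := by
    rw [← Finset.sum_mul, sum_weight, one_mul]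
  have h0 (a : PrunedTree k) :
      ∑ b, bern3 p q 0 * (weight p q a * weight p q b) * F (node 0 a b)
        = weight p q (left a) * F (left a) := by
    change ∑ b, p * (weight p q a * weight p q b) * F (left a) = p * weight p q a * F (left a)
    simp_rw [mul_left_comm p, ← mul_assoc, mul_comm _ (weight p q _), mul_assoc]
    exact sum_weight_mul_const _
  have h1 : ∑ a, ∑ b, bern3 p q 1 * (weight p q a * weight p q b) * F (node 1 a b)
      = ∑ b, weight p q (right b) * F (right b) := by
    rw [Finset.sum_comm]
    refine Finset.sum_congr rfl fun b _ => ?_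
    change ∑ a, q * (weight p q a * weight p q b) * F (right b) = q * weight p q b * F (right b)
    simp_rw [mul_left_comm q, mul_assoc]
    exact sum_weight_mul_const _
  have h2 (a b : PrunedTree k) :
      bern3 p q 2 * (weight p q a * weight p q b) * F (node 2 a b)
        = weight p q (both a b) * F (both a b) := rfl
  simp only [sum_succ, Fintype.sum_prod_type, Fin.sum_univ_three, h0, h1, h2, add_assoc]

end Weight

lemma cons_mem_nodesAt_node {k : ℕ} (s : Fin 3) (a b : PrunedTree k) (c : Bool) (τ : List Bool)
    (j : ℕ) :
    c :: τ ∈ nodesAt (node s a b) (j + 1) ↔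
      if c then s ≠ 0 ∧ τ ∈ nodesAt b j else s ≠ 1 ∧ τ ∈ nodesAt a j := by
  fin_cases s <;> cases c <;> simp [node, nodesAt]

section CommonPath

variable {ι : Type*}

def HasCommonPath {k : ℕ} (T : ι → PrunedTree k) : Prop :=
  ∃ σ : List Bool, σ.length = k ∧ ∀ i, σ ∈ nodesAt (T i) k

lemma hasCommonPath_node {k : ℕ} (s : ι → Fin 3) (A B : ι → PrunedTree k) :
    HasCommonPath (fun i => node (s i) (A i) (B i))
      ↔ (∀ i, s i ≠ 1) ∧ HasCommonPath A ∨ (∀ i, s i ≠ 0) ∧ HasCommonPath B := by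
  constructor
  · rintro ⟨_ | ⟨c, τ⟩, hlen, hσ⟩
    · simp at hlen
    simp only [cons_mem_nodesAt_node] at hσ
    cases c
    · exact .inl ⟨fun i => (hσ i).1, τ, by simpa using hlen, fun i => (hσ i).2⟩
    · exact .inr ⟨fun i => (hσ i).1, τ, by simpa using hlen, fun i => (hσ i).2⟩
  · rintro (⟨hs, τ, hlen, hτ⟩ | ⟨hs, τ, hlen, hτ⟩)
    · exact ⟨false :: τ, by simp [hlen], fun i =>
        (cons_mem_nodesAt_node ..).2 ⟨hs i, hτ i⟩⟩
    · exact ⟨true :: τ, by simp [hlen], fun i =>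
        (cons_mem_nodesAt_node ..).2 ⟨hs i, hτ i⟩⟩

/-- Inclusion–exclusion over the two subtrees of the roots; the factors `1` give each term the
shape of `sum_prod_triple`. -/
lemma indicator_hasCommonPath_node {k : ℕ} (s : ι → Fin 3) (A B : ι → PrunedTree k) :
    {T | HasCommonPath T}.indicator (1 : (ι → PrunedTree (k + 1)) → ℝ)
        (fun i => node (s i) (A i) (B i))
      = (Set.univ.pi fun _ => {a | a ≠ 1}).indicator 1 s * {T | HasCommonPath T}.indicator 1 A
            * (1 : (ι → PrunedTree k) → ℝ) B
        + (Set.univ.pi fun _ => {a | a ≠ 0}).indicator 1 s * (1 : (ι → PrunedTree k) → ℝ) A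
            * {T | HasCommonPath T}.indicator 1 B
        - (Set.univ.pi fun _ => {a | a ≠ 1 ∧ a ≠ 0}).indicator 1 s
            * {T | HasCommonPath T}.indicator 1 A * {T | HasCommonPath T}.indicator 1 B := by
  classical
  simp only [Set.indicator_apply, Set.mem_ofPred_eq, Set.mem_univ_pi, Pi.one_apply,
    hasCommonPath_node, forall_and]
  split_ifs <;> simp_all

end CommonPath

section CommonPathWeight

variable (p q : ℝ) (ι : Type*) [Fintype ι] [DecidableEq ι]

noncomputable def commonPathWeight (k : ℕ) : ℝ :=
  ∑ T : ι → PrunedTree k, (∏ i, weight p q (T i)) * {T | HasCommonPath T}.indicator 1 T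

lemma commonPathWeight_zero : commonPathWeight p q ι 0 = 1 := by
  rw [commonPathWeight, Fintype.sum_eq_single (fun _ : ι => leaf)
    fun T hT => absurd (funext fun i => eq_leaf (T i)) hT]
  simp [weight, HasCommonPath, nodesAt]

lemma commonPathWeight_succ (k : ℕ) :
    commonPathWeight p q ι (k + 1)
      = ((1 - q) ^ Fintype.card ι + (1 - p) ^ Fintype.card ι) * commonPathWeight p q ι k
        - (1 - p - q) ^ Fintype.card ι * commonPathWeight p q ι k ^ 2 := by
  have hsum_one :
      ∑ A : ι → PrunedTree k, (∏ i, weight p q (A i)) * (1 : (ι → PrunedTree k) → ℝ) A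
        = 1 := by
    simp [← Fintype.prod_sum, sum_weight]
  rw [commonPathWeight, sum_prod_mul_eq_sum_prod_mul_comp (sum_weight_mul p q)]
  simp only [Function.comp_def, indicator_hasCommonPath_node, mul_add, mul_sub,
    Finset.sum_add_distrib, Finset.sum_sub_distrib, sum_prod_triple,
    sum_prod_mul_indicator_univ_pi, hsum_one]
  simp [Fin.sum_univ_three, bern3, commonPathWeight]
  ring

end CommonPathWeight

end PrunedTree

open PrunedTree

open Classical in
lemma inter_pathsOf_nonempty_subset {ι : Type*} [Fintype ι] [DecidableEq ι] (k : ℕ) :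
    {x : ι → ℕ → Fin 3 | (⋂ i, pathsOf (treeOf (x i))).Nonempty}
      ⊆ ⋃ T ∈ ({T | HasCommonPath T} : Finset (ι → PrunedTree k)),
          Set.univ.pi fun i => prefixCylinder (code (T i)) := by
  rintro x ⟨y, hy⟩
  have hσ (i : ι) : List.ofFn (fun j : Fin k => y j) ∈ nodesAt (truncate (x i) k) k := by
    have h := Set.mem_iInter.1 hy i k
    rwa [treeOf, Set.mem_ofPred_eq, List.length_ofFn,
      levels_eq_of_mem_prefixCylinder (mem_prefixCylinder_code_truncate (x i) k) le_rfl] at h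
  refine Set.mem_biUnion (x := fun i => truncate (x i) k) ?_ ?_
  · simpa using ⟨_, List.length_ofFn, hσ⟩
  · exact Set.mem_univ_pi.2 fun i => mem_prefixCylinder_code_truncate (x i) k

open Classical in
lemma measure_inter_pathsOf_nonempty_le {p q : ℝ} (hp : 0 ≤ p) (hq : 0 ≤ q)
    (hpq : p + q ≤ 1) {μ : Measure (ℕ → Fin 3)} (hμ : IsBernoulliMeasure p q μ)
    (ι : Type*) [Fintype ι] [DecidableEq ι] (k : ℕ) :
    Measure.pi (fun _ : ι => μ) {x | (⋂ i, pathsOf (treeOf (x i))).Nonempty}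
      ≤ ENNReal.ofReal (commonPathWeight p q ι k) := by
  have := hμ.1
  have hW (T : ι → PrunedTree k) : 0 ≤ ∏ i, weight p q (T i) :=
    Finset.prod_nonneg fun i _ => weight_nonneg hp hq hpq (T i)
  calc _ ≤ ∑ T ∈ ({T | HasCommonPath T} : Finset (ι → PrunedTree k)),
          Measure.pi (fun _ : ι => μ) (Set.univ.pi fun i => prefixCylinder (code (T i))) :=
        (measure_mono (inter_pathsOf_nonempty_subset k)).trans (measure_biUnion_finset_le _ _)
    _ = ∑ T ∈ ({T | HasCommonPath T} : Finset (ι → PrunedTree k)),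
          ENNReal.ofReal (∏ i, weight p q (T i)) := by
        refine Finset.sum_congr rfl fun T _ => ?_
        simp only [Measure.pi_pi, measure_prefixCylinder hμ, prod_map_bern3_code]
        exact (ENNReal.ofReal_prod_of_nonneg fun i _ => weight_nonneg hp hq hpq (T i)).symm
    _ = ENNReal.ofReal (commonPathWeight p q ι k) := by
        rw [← ENNReal.ofReal_sum_of_nonneg fun T _ => hW T, Finset.sum_filter, commonPathWeight]
        congr 1
        refine Finset.sum_congr rfl fun T _ => ?_
        by_cases hT : HasCommonPath T <;> simp [hT]

lemma one_sub_pow_le_half {n : ℕ} (hn : n ≠ 0) {p : ℝ} (hp : 1 - (1 / 2 : ℝ) ^ ((n : ℝ)⁻¹) ≤ p)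
    (hp1 : p ≤ 1) : (1 - p) ^ n ≤ 1 / 2 :=
  calc (1 - p) ^ n ≤ ((1 / 2 : ℝ) ^ ((n : ℝ)⁻¹)) ^ n :=
        pow_le_pow_left₀ (by linarith) (by linarith) n
    _ = 1 / 2 := Real.rpow_inv_natCast_pow (by norm_num) hn

/-- For `n ≥ 2` and `1 - (1/2)^(1/n) ≤ p ≤ 1/2`, for `μ_p^{⊗n}`-almost every
tuple `(x₁, …, xₙ) ∈ (3^ω)ⁿ` the intersection `⋂ᵢ [T_{xᵢ}]` is empty. -/
theorem stmt0 (n : ℕ) (hn : 2 ≤ n) (p : ℝ)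
    (hp1 : 1 - (1 / 2 : ℝ) ^ ((n : ℝ)⁻¹) ≤ p) (hp2 : p ≤ 1 / 2)
    (μ : Measure (ℕ → Fin 3)) (hμ : IsBernoulliMeasure p p μ) :
    ∀ᵐ x : Fin n → (ℕ → Fin 3) ∂(Measure.pi fun _ : Fin n => μ),
      (⋂ i, pathsOf (treeOf (x i))) = ∅ := by
  have hp0 : 0 ≤ p := by
    have : (1 / 2 : ℝ) ^ ((n : ℝ)⁻¹) ≤ 1 :=
      Real.rpow_le_one (by norm_num) (by norm_num) (by positivity)
    linarith
  have ha := one_sub_pow_le_half (by omega) hp1 (by linarith)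
  have hb : 0 ≤ (1 - p - p) ^ n := pow_nonneg (by linarith) n
  have hba : (1 - p - p) ^ n ≤ (1 - p) ^ n := pow_le_pow_left₀ (by linarith) (by linarith) n
  have hdecay : 0 < (1 - p - p) ^ n ∨ (1 - p) ^ n + (1 - p) ^ n < 1 := by
    rcases hp2.lt_or_eq with hlt | rfl
    · exact .inl (pow_pos (by linarith) n)
    · have : (1 - 1 / 2 : ℝ) ^ n ≤ (1 - 1 / 2) ^ 2 :=
        pow_le_pow_of_le_one (by norm_num) (by norm_num) hn
      exact .inr (by linarith)
  have hlim : Tendsto (commonPathWeight p p (Fin n)) atTop (𝓝 0) :=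
    tendsto_zero_of_recurrence hb (by linarith) (by linarith) hdecay
      (commonPathWeight_zero p p _) fun k => by rw [commonPathWeight_succ, Fintype.card_fin]
  rw [ae_iff]
  refine le_antisymm (ge_of_tendsto' (by simpa using ENNReal.tendsto_ofReal hlim) fun k => ?_)
    zero_le
  simpa [← Set.nonempty_iff_ne_empty] using
    measure_inter_pathsOf_nonempty_le hp0 hp0 (by linarith) hμ (Fin n) k
end

section
/- Let p, q, r, s ≥ 0 be reals with p + q ≤ 1, r + s ≤ 1, and p + q + r + s < 1 + pr + qs. Then (μ_{⟨p,q⟩} ⊗ μ_{⟨r,s⟩})({(x, y) ∈ 3^ω × 3^ω : [T_x] ∩ [T_y] = ∅}) = (ps + qr) / ((1 − p − q)(1 − r − s)). -/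
open MeasureTheory

/-!
The number `Z_n` of nodes shared by the `n`-th levels of `T_x` and `T_y` is a Galton–Watson
process: a shared node `σ` has `overlap a b` shared children, where `a` and `b` are the code
symbols read at `σ` in `x` and in `y`, and these are fresh coordinates, independent of everything
read before. Hence `E[t ^ Z_n] = f^[n] t` for the offspring generating function
`f t = A + (1 - A - C) t + C t²`, `A = ps + qr`, `C = (1-p-q)(1-r-s)`. By compactness of Cantor
space, `[T_x] ∩ [T_y] = ∅` iff some `Z_n` vanishes, so the measure is the extinction probability
`lim f^[n] 0`. The fixed points of `f` are `1` and `A / C`, and the hypothesis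
`p + q + r + s < 1 + pr + qs` says exactly `A < C`; on `[0, A / C]` the map `f` contracts towards
`A / C` with ratio `1 + A - C`.

Since the measures are only known on cylinders, expectations are computed as finite sums over the
code prefixes that determine the first `n` levels.
-/

namespace Finset

variable {ι κ κ' A B R : Type*} [Fintype A] [Fintype B] [CommSemiring R]

lemma sum_mul_prod_of_card_le_one {w : A → R} (hw : ∑ a, w a = 1) {t : Finset ι}
    (ht : t.card ≤ 1) (F : ι → A → R) :
    ∑ a, w a * ∏ j ∈ t, F j a = ∏ j ∈ t, ∑ a, w a * F j a := by
  rcases t.eq_empty_or_nonempty with rfl | hne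
  · simp [hw]
  · obtain ⟨j, rfl⟩ := card_eq_one.1 (le_antisymm ht hne.card_pos)
    simp

variable [Fintype κ] [DecidableEq κ] [Fintype κ'] [DecidableEq κ']

lemma sum_prod_mul_prod_comp {w : A → R} (hw : ∑ a, w a = 1) (s : Finset ι) {i : ι → κ}
    (hi : Set.InjOn i s) (F : ι → A → R) :
    ∑ α : κ → A, (∏ k, w (α k)) * ∏ j ∈ s, F j (α (i j)) = ∏ j ∈ s, ∑ a, w a * F j a := by
  have hfiber (k : κ) : (s.filter (i · = k)).card ≤ 1 :=
    card_le_one.2 fun j hj j' hj' => by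
      simp only [mem_filter] at hj hj'
      exact hi hj.1 hj'.1 (hj.2.trans hj'.2.symm)
  calc ∑ α : κ → A, (∏ k, w (α k)) * ∏ j ∈ s, F j (α (i j))
      = ∑ α : κ → A, ∏ k, w (α k) * ∏ j ∈ s with i j = k, F j (α k) := by
        refine sum_congr rfl fun α _ => ?_
        rw [prod_mul_distrib, ← prod_fiberwise s i]
        congr 1
        exact prod_congr rfl fun k _ => prod_congr rfl fun j hj => by rw [(mem_filter.1 hj).2]
    _ = ∏ k, ∑ a, w a * ∏ j ∈ s with i j = k, F j a :=
        (Fintype.prod_sum fun k a => w a * ∏ j ∈ s with i j = k, F j a).symm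
    _ = ∏ k, ∏ j ∈ s with i j = k, ∑ a, w a * F j a :=
        prod_congr rfl fun k _ => sum_mul_prod_of_card_le_one hw (hfiber k) F
    _ = ∏ j ∈ s, ∑ a, w a * F j a := prod_fiberwise s i _

lemma sum_sum_prod_mul_prod_comp {w : A → R} {w' : B → R} (hw : ∑ a, w a = 1)
    (hw' : ∑ b, w' b = 1) (s : Finset ι) {i : ι → κ} {i' : ι → κ'} (hi : Set.InjOn i s)
    (hi' : Set.InjOn i' s) (g : A → B → R) :
    ∑ α : κ → A, ∑ β : κ' → B, (∏ k, w (α k)) * (∏ k, w' (β k)) * ∏ j ∈ s, g (α (i j)) (β (i' j))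
      = (∑ a, ∑ b, w a * w' b * g a b) ^ s.card := by
  calc _ = ∑ α : κ → A, (∏ k, w (α k)) *
        ∑ β : κ' → B, (∏ k, w' (β k)) * ∏ j ∈ s, g (α (i j)) (β (i' j)) := by
        simp_rw [mul_sum, mul_assoc]
    _ = ∑ α : κ → A, (∏ k, w (α k)) * ∏ j ∈ s, ∑ b, w' b * g (α (i j)) b := by
        simp_rw [sum_prod_mul_prod_comp hw' s hi']
    _ = ∏ j ∈ s, ∑ a, w a * ∑ b, w' b * g a b :=
        sum_prod_mul_prod_comp hw s hi fun _ a => ∑ b, w' b * g a b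
    _ = _ := by simp_rw [prod_const, mul_sum, mul_assoc]

end Finset

section Iteration
open Filter Topology

lemma tendsto_iterate_of_sub_le_mul_sub {F : ℝ → ℝ} {S : Set ℝ} {L ρ t₀ : ℝ} (hρ₀ : 0 ≤ ρ)
    (hρ₁ : ρ < 1) (hS : Set.MapsTo F S S) (ht₀ : t₀ ∈ S) (hle : ∀ t ∈ S, t ≤ L)
    (hF : ∀ t ∈ S, L - F t ≤ ρ * (L - t)) :
    Tendsto (fun n => F^[n] t₀) atTop (𝓝 L) := by
  have hmem (n : ℕ) : F^[n] t₀ ∈ S := hS.iterate n ht₀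
  have hdist (n : ℕ) : L - F^[n] t₀ ≤ ρ ^ n * (L - t₀) := by
    induction n with
    | zero => simp
    | succ n ih =>
      rw [Function.iterate_succ_apply', pow_succ', mul_assoc]
      exact (hF _ (hmem n)).trans (mul_le_mul_of_nonneg_left ih hρ₀)
  have hlower : Tendsto (fun n => L - ρ ^ n * (L - t₀)) atTop (𝓝 L) := by
    simpa using tendsto_const_nhds.sub
      ((tendsto_pow_atTop_nhds_zero_of_lt_one hρ₀ hρ₁).mul_const (L - t₀))
  exact tendsto_of_tendsto_of_tendsto_of_le_of_le hlower tendsto_const_nhds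
    (fun n => by linarith [hdist n]) fun n => hle _ (hmem n)

lemma tendsto_iterate_quadratic {a c : ℝ} (ha : 0 ≤ a) (hac : a < c) (hb : 0 ≤ 1 - a - c) :
    Tendsto (fun n => (fun t => a + (1 - a - c) * t + c * t ^ 2)^[n] 0) atTop (𝓝 (a / c)) := by
  have hc : 0 < c := ha.trans_lt hac
  have hL : 0 ≤ a / c := div_nonneg ha hc.le
  set L := a / c
  have hcL : c * L = a := mul_div_cancel₀ a hc.ne'
  clear_value L
  have hfactor (t : ℝ) : L - (a + (1 - a - c) * t + c * t ^ 2) = (L - t) * ((1 - c) + c * t) := by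
    linear_combination (1 - t) * hcL
  have hct {t : ℝ} (ht : t ∈ Set.Icc 0 L) : c * t ≤ a := hcL ▸ mul_le_mul_of_nonneg_left ht.2 hc.le
  refine tendsto_iterate_of_sub_le_mul_sub (S := Set.Icc 0 L) (ρ := 1 + a - c)
    (by linarith) (by linarith) (fun t ht => ⟨by nlinarith [ht.1], ?_⟩) ⟨le_rfl, hL⟩
    (fun t ht => ht.2) fun t ht => ?_
  · rw [← sub_nonneg, hfactor]
    exact mul_nonneg (sub_nonneg.2 ht.2) (by nlinarith [ht.1])
  · rw [hfactor]
    nlinarith [mul_le_mul_of_nonneg_left (hct ht) (sub_nonneg.2 ht.2)]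

end Iteration

namespace CodedTree

open Finset Filter Topology

variable {x y : ℕ → Fin 3} {n : ℕ} {u u' v : List (Fin 3)} {p q r s : ℝ}

def level (x : ℕ → Fin 3) (n : ℕ) : List (List Bool) := (levels x n).1

def offset (x : ℕ → Fin 3) (n : ℕ) : ℕ := (levels x n).2

lemma offset_succ : offset x (n + 1) = offset x n + (level x n).length := rfl

lemma mem_level_succ_iff_exists_index {τ : List Bool} :
    τ ∈ level x (n + 1) ↔
      ∃ i : Fin (level x n).length, τ ∈ children (level x n)[i] (x (offset x n + i)) := by
  simp only [level, levels, List.mem_flatten, List.mem_map, List.mem_zipIdx_iff_getElem?]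
  constructor
  · rintro ⟨_, ⟨⟨σ, i⟩, hi, rfl⟩, hτ⟩
    obtain ⟨hlt, hσ⟩ := List.getElem?_eq_some_iff.1 hi
    exact ⟨⟨i, hlt⟩, hσ ▸ hτ⟩
  · rintro ⟨i, hτ⟩
    exact ⟨_, ⟨((level x n)[i], i), by simp [level], rfl⟩, hτ⟩

lemma exists_eq_append_of_mem_children {σ τ : List Bool} {a : Fin 3} (h : τ ∈ children σ a) :
    ∃ b, τ = σ ++ [b] := by
  fin_cases a <;> simp only [children] at h <;> aesop

lemma eq_of_mem_children {σ σ' τ : List Bool} {a a' : Fin 3} (h : τ ∈ children σ a)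
    (h' : τ ∈ children σ' a') : σ = σ' := by
  obtain ⟨b, rfl⟩ := exists_eq_append_of_mem_children h
  obtain ⟨b', hb'⟩ := exists_eq_append_of_mem_children h'
  exact (List.append_inj' hb' rfl).1

lemma length_of_mem_level {σ : List Bool} (h : σ ∈ level x n) : σ.length = n := by
  induction n generalizing σ with
  | zero => simp_all [level, levels]
  | succ n ih =>
    obtain ⟨i, hσ⟩ := mem_level_succ_iff_exists_index.1 h
    obtain ⟨b, rfl⟩ := exists_eq_append_of_mem_children hσ
    simp [ih (List.getElem_mem _)]

lemma nodup_children (σ : List Bool) (a : Fin 3) : (children σ a).Nodup := by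
  fin_cases a <;> simp [children]

lemma nodup_level (x : ℕ → Fin 3) (n : ℕ) : (level x n).Nodup := by
  induction n with
  | zero => simp [level, levels]
  | succ n ih =>
    simp only [level, levels, List.nodup_flatten, List.mem_map, List.pairwise_map]
    refine ⟨?_, ?_⟩
    · rintro _ ⟨q, -, rfl⟩
      exact nodup_children _ _
    · have hfst : (levels x n).1.zipIdx.Pairwise (fun a b => a.1 ≠ b.1) := by
        rw [← List.pairwise_map, List.zipIdx_map_fst]
        exact ih
      exact hfst.imp fun hne τ h h' => hne (eq_of_mem_children h h')

lemma levels_congr {x' : ℕ → Fin 3} (h : ∀ i < offset x n, x i = x' i) :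
    levels x n = levels x' n := by
  induction n with
  | zero => rfl
  | succ n ih =>
    have hn : levels x n = levels x' n := ih fun i hi => h i (by rw [offset_succ]; omega)
    simp only [levels, ← hn, Prod.mk.injEq, and_true]
    congr 1
    refine List.map_congr_left fun q hq => ?_
    have hq2 : q.2 < (levels x n).1.length := by
      obtain ⟨hlt, -⟩ := List.getElem?_eq_some_iff.1 (List.mem_zipIdx_iff_getElem?.1 hq)
      exact hlt
    rw [h _ (by rw [offset_succ]; exact Nat.add_lt_add_left hq2 _)]

def code (x : ℕ → Fin 3) (σ : List Bool) : Fin 3 :=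
  x (offset x σ.length + (level x σ.length).idxOf σ)

lemma mem_level_succ_iff {τ : List Bool} :
    τ ∈ level x (n + 1) ↔ ∃ σ ∈ level x n, τ ∈ children σ (code x σ) := by
  rw [mem_level_succ_iff_exists_index]
  constructor
  · rintro ⟨i, hτ⟩
    refine ⟨_, List.getElem_mem i.2, ?_⟩
    rwa [code, length_of_mem_level (List.getElem_mem i.2), (nodup_level x n).idxOf_getElem]
  · rintro ⟨σ, hσ, hτ⟩
    refine ⟨⟨_, List.idxOf_lt_length_iff.2 hσ⟩, ?_⟩
    simpa only [Fin.getElem_fin, List.getElem_idxOf, code, length_of_mem_level hσ] using hτ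

lemma mem_level_of_append_mem {σ : List Bool} {b : Bool} (h : σ ++ [b] ∈ level x (n + 1)) :
    σ ∈ level x n := by
  obtain ⟨σ', hσ', h⟩ := mem_level_succ_iff.1 h
  obtain ⟨b', hb'⟩ := exists_eq_append_of_mem_children h
  rwa [(List.append_inj' hb' rfl).1]

def common (x y : ℕ → Fin 3) (n : ℕ) : Finset (List Bool) :=
  (level x n).toFinset ∩ (level y n).toFinset

def overlap (a b : Fin 3) : ℕ :=
  if a = b then (if a = 2 then 2 else 1) else if a = 2 ∨ b = 2 then 1 else 0

lemma card_children_inter (σ : List Bool) (a b : Fin 3) :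
    ((children σ a).toFinset ∩ (children σ b).toFinset).card = overlap a b := by
  fin_cases a <;> fin_cases b <;> simp [children, overlap]

lemma common_succ : common x y (n + 1) = (common x y n).biUnion fun σ =>
    (children σ (code x σ)).toFinset ∩ (children σ (code y σ)).toFinset := by
  ext τ
  simp only [common, mem_inter, List.mem_toFinset, mem_biUnion, mem_level_succ_iff]
  constructor
  · rintro ⟨⟨σ, hσx, hτx⟩, ⟨σ', hσy, hτy⟩⟩
    obtain rfl := eq_of_mem_children hτx hτy
    exact ⟨σ, ⟨hσx, hσy⟩, hτx, hτy⟩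
  · rintro ⟨σ, ⟨hσx, hσy⟩, hτx, hτy⟩
    exact ⟨⟨σ, hσx, hτx⟩, σ, hσy, hτy⟩

lemma card_common_succ : (common x y (n + 1)).card =
    ∑ σ ∈ common x y n, overlap (code x σ) (code y σ) := by
  rw [common_succ, card_biUnion]
  · exact sum_congr rfl fun σ _ => card_children_inter σ _ _
  · intro σ _ σ' _ hne
    refine disjoint_left.2 fun τ hτ hτ' => hne ?_
    simp only [mem_inter, List.mem_toFinset] at hτ hτ'
    exact eq_of_mem_children hτ.1 hτ'.1

lemma common_succ_eq_empty (h : common x y n = ∅) : common x y (n + 1) = ∅ := by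
  rw [common_succ, h, biUnion_empty]

lemma pathsOf_inter (S T : Set (List Bool)) : pathsOf (S ∩ T) = pathsOf S ∩ pathsOf T := by
  ext z
  simp [pathsOf, forall_and]

lemma pathsOf_nonempty {T : Set (List Bool)} (hT : ∀ σ b, σ ++ [b] ∈ T → σ ∈ T)
    (hne : ∀ n, ∃ σ ∈ T, σ.length = n) : (pathsOf T).Nonempty := by
  set K : ℕ → Set (ℕ → Bool) := fun n => {z | List.ofFn (fun i : Fin n => z i) ∈ T}
  have hK : pathsOf T = ⋂ n, K n := by ext; simp [pathsOf, K]
  have hclosed (n : ℕ) : IsClosed (K n) :=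
    (isClosed_discrete {g : Fin n → Bool | List.ofFn g ∈ T}).preimage
      (f := fun (z : ℕ → Bool) (i : Fin n) => z i) (by fun_prop)
  rw [hK]
  refine IsCompact.nonempty_iInter_of_sequence_nonempty_isCompact_isClosed K
    (fun n z hz => ?_) (fun n => ?_) (hclosed 0).isCompact hclosed
  · simp only [K, Set.mem_ofPred_eq, List.ofFn_succ', List.concat_eq_append] at hz ⊢
    exact hT _ _ hz
  · obtain ⟨σ, hσ, rfl⟩ := hne n
    refine ⟨fun i => σ.getD i false, ?_⟩
    simpa [K, List.getD_eq_getElem] using hσ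

lemma mem_treeOf_iff {σ : List Bool} : σ ∈ treeOf x ↔ σ ∈ level x σ.length := Iff.rfl

lemma mem_treeOf_of_mem_level {σ : List Bool} (h : σ ∈ level x n) : σ ∈ treeOf x := by
  rwa [mem_treeOf_iff, length_of_mem_level h]

lemma mem_treeOf_of_append_mem {σ : List Bool} {b : Bool} (h : σ ++ [b] ∈ treeOf x) :
    σ ∈ treeOf x :=
  mem_level_of_append_mem (b := b) (by simpa [mem_treeOf_iff] using h)

lemma pathsOf_inter_eq_empty_iff :
    pathsOf (treeOf x) ∩ pathsOf (treeOf y) = ∅ ↔ ∃ n, common x y n = ∅ := by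
  constructor
  · intro h
    by_contra! hne
    have hlevel (n : ℕ) : ∃ σ ∈ treeOf x ∩ treeOf y, σ.length = n := by
      obtain ⟨σ, hσ⟩ := hne n
      simp only [common, mem_inter, List.mem_toFinset] at hσ
      exact ⟨σ, ⟨mem_treeOf_of_mem_level hσ.1, mem_treeOf_of_mem_level hσ.2⟩,
        length_of_mem_level hσ.1⟩
    obtain ⟨z, hz⟩ := pathsOf_nonempty (T := treeOf x ∩ treeOf y)
      (fun σ b ⟨hx, hy⟩ => ⟨mem_treeOf_of_append_mem hx, mem_treeOf_of_append_mem hy⟩) hlevel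
    simp only [pathsOf_inter, h] at hz
    exact hz
  · rintro ⟨n, hn⟩
    refine Set.eq_empty_iff_forall_notMem.2 fun z ⟨hzx, hzy⟩ => ?_
    have hz : List.ofFn (fun i : Fin n => z i) ∈ common x y n := by
      have hx := hzx n
      have hy := hzy n
      rw [mem_treeOf_iff, List.length_ofFn] at hx hy
      simpa [common] using ⟨hx, hy⟩
    simp [hn] at hz

def toCode (u : List (Fin 3)) : ℕ → Fin 3 := fun i => u.getD i 0

def codeCylinder (u : List (Fin 3)) : Set (ℕ → Fin 3) := {x | ∀ i : Fin u.length, x i = u.get i}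

lemma mem_codeCylinder_iff : x ∈ codeCylinder u ↔ ∀ i < u.length, x i = toCode u i := by
  simp only [codeCylinder, Set.mem_ofPred_eq, Fin.forall_iff, List.get_eq_getElem, toCode]
  exact forall₂_congr fun i hi => by rw [List.getD_eq_getElem _ _ hi]

lemma toCode_append_of_lt (w : List (Fin 3)) {i : ℕ} (hi : i < u.length) :
    toCode (u ++ w) i = toCode u i :=
  List.getD_append _ _ _ _ hi

lemma toCode_append_ofFn {m : ℕ} (α : Fin m → Fin 3) (k : Fin m) :
    toCode (u ++ List.ofFn α) (u.length + k) = α k := by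
  simp [toCode]

lemma toCode_append_mem_codeCylinder (u w : List (Fin 3)) : toCode (u ++ w) ∈ codeCylinder u :=
  mem_codeCylinder_iff.2 fun _ => toCode_append_of_lt w

lemma eq_of_mem_codeCylinder (hu : x ∈ codeCylinder u) (hu' : x ∈ codeCylinder u')
    (h : u.length = u'.length) : u = u' :=
  List.ext_get h fun i hi hi' => (hu ⟨i, hi⟩).symm.trans (hu' ⟨i, hi'⟩)

lemma levels_eq_of_mem_codeCylinder (hu : offset (toCode u) n = u.length)
    (hx : x ∈ codeCylinder u) : levels x n = levels (toCode u) n :=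
  (levels_congr fun i hi => (mem_codeCylinder_iff.1 hx i (hu ▸ hi)).symm).symm

-- The strings `x ↾ offset x n` for `x ∈ 3^ω`: the symbols read while building levels `< n`.
def codePrefixes : ℕ → Finset (List (Fin 3))
  | 0 => {[]}
  | n + 1 => (codePrefixes n).biUnion fun u =>
      univ.image fun α : Fin (level (toCode u) n).length → Fin 3 => u ++ List.ofFn α

lemma offset_toCode_of_mem_codePrefixes (hu : u ∈ codePrefixes n) :
    offset (toCode u) n = u.length := by
  induction n generalizing u with
  | zero => simp_all [codePrefixes, offset, levels]
  | succ n ih =>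
    simp only [codePrefixes, mem_biUnion, mem_image, mem_univ, true_and] at hu
    obtain ⟨v, hv, α, rfl⟩ := hu
    have hlevels := levels_eq_of_mem_codeCylinder (ih hv)
      (toCode_append_mem_codeCylinder v (List.ofFn α))
    rw [offset_succ, show level _ n = level (toCode v) n from congrArg Prod.fst hlevels,
      show offset _ n = offset (toCode v) n from congrArg Prod.snd hlevels, ih hv,
      List.length_append, List.length_ofFn]

lemma exists_mem_codePrefixes (x : ℕ → Fin 3) (n : ℕ) :
    ∃ u ∈ codePrefixes n, x ∈ codeCylinder u := by
  induction n with
  | zero => exact ⟨[], by simp [codePrefixes], fun i => i.elim0⟩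
  | succ n ih =>
    obtain ⟨u, hu, hx⟩ := ih
    refine ⟨u ++ List.ofFn fun i : Fin (level (toCode u) n).length => x (u.length + i), ?_, ?_⟩
    · simp only [codePrefixes, mem_biUnion, mem_image, mem_univ, true_and]
      exact ⟨u, hu, _, rfl⟩
    · refine mem_codeCylinder_iff.2 fun i hi => ?_
      rcases lt_or_ge i u.length with hiu | hiu
      · rw [toCode_append_of_lt _ hiu, mem_codeCylinder_iff.1 hx i hiu]
      · obtain ⟨k, rfl⟩ := Nat.exists_eq_add_of_le hiu
        simp only [List.length_append, List.length_ofFn, Nat.add_lt_add_iff_left] at hi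
        exact (toCode_append_ofFn (u := u) (fun i : Fin _ => x (u.length + i)) ⟨k, hi⟩).symm

lemma level_eq_of_mem_codePrefixes (hu : u ∈ codePrefixes n) (hx : x ∈ codeCylinder u) :
    level x n = level (toCode u) n :=
  congrArg Prod.fst (levels_eq_of_mem_codeCylinder (offset_toCode_of_mem_codePrefixes hu) hx)

lemma offset_eq_of_mem_codePrefixes (hu : u ∈ codePrefixes n) (hx : x ∈ codeCylinder u) :
    offset x n = u.length :=
  (congrArg Prod.snd
    (levels_eq_of_mem_codeCylinder (offset_toCode_of_mem_codePrefixes hu) hx)).trans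
      (offset_toCode_of_mem_codePrefixes hu)

lemma common_eq_of_mem_codePrefixes (hu : u ∈ codePrefixes n) (hv : v ∈ codePrefixes n)
    (hx : x ∈ codeCylinder u) (hy : y ∈ codeCylinder v) :
    common x y n = common (toCode u) (toCode v) n := by
  rw [common, common, level_eq_of_mem_codePrefixes hu hx, level_eq_of_mem_codePrefixes hv hy]

lemma eq_of_mem_codePrefixes (hu : u ∈ codePrefixes n) (hu' : u' ∈ codePrefixes n)
    (hx : x ∈ codeCylinder u) (hx' : x ∈ codeCylinder u') : u = u' :=
  eq_of_mem_codeCylinder hx hx'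
    ((offset_eq_of_mem_codePrefixes hu hx).symm.trans (offset_eq_of_mem_codePrefixes hu' hx'))

lemma sum_codePrefixes_succ {M : Type*} [AddCommMonoid M] (F : List (Fin 3) → M) :
    ∑ u ∈ codePrefixes (n + 1), F u = ∑ u ∈ codePrefixes n,
      ∑ α : Fin (level (toCode u) n).length → Fin 3, F (u ++ List.ofFn α) := by
  rw [codePrefixes, sum_biUnion]
  · refine sum_congr rfl fun u _ => sum_image fun α _ α' _ h => ?_
    exact List.ofFn_injective (List.append_cancel_left h)
  · intro u hu u' hu' hne
    simp only [Function.onFun, disjoint_left, mem_image, mem_univ, true_and]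
    rintro _ ⟨α, rfl⟩ ⟨α', h⟩
    refine hne (eq_of_mem_codePrefixes hu hu' (toCode_append_mem_codeCylinder u (List.ofFn α)) ?_)
    rw [← h]
    exact toCode_append_mem_codeCylinder u' _

def indexIn {E : Type*} [BEq E] [LawfulBEq E] (L : List E) (a : {a // a ∈ L}) : Fin L.length :=
  ⟨L.idxOf a.1, List.idxOf_lt_length_iff.2 a.2⟩

lemma indexIn_injective {E : Type*} [BEq E] [LawfulBEq E] (L : List E) :
    Function.Injective (indexIn L) := by
  intro a a' h
  have h' : L.idxOf a.1 = L.idxOf a'.1 := congrArg Fin.val h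
  exact Subtype.ext <| by
    rw [← List.getElem_idxOf (List.idxOf_lt_length_iff.2 a.2),
      ← List.getElem_idxOf (List.idxOf_lt_length_iff.2 a'.2)]
    simp only [h']

lemma code_toCode_append {σ : List Bool} (hu : u ∈ codePrefixes n) (hσ : σ ∈ level (toCode u) n)
    (α : Fin (level (toCode u) n).length → Fin 3) :
    code (toCode (u ++ List.ofFn α)) σ = α (indexIn _ ⟨σ, hσ⟩) := by
  have hx := toCode_append_mem_codeCylinder u (List.ofFn α)
  rw [code, length_of_mem_level hσ, offset_eq_of_mem_codePrefixes hu hx,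
    level_eq_of_mem_codePrefixes hu hx]
  exact toCode_append_ofFn α (indexIn _ ⟨σ, hσ⟩)

def weight (p q : ℝ) (u : List (Fin 3)) : ℝ := (u.map (bern3 p q)).prod

lemma weight_append_ofFn (u : List (Fin 3)) {m : ℕ} (α : Fin m → Fin 3) :
    weight p q (u ++ List.ofFn α) = weight p q u * ∏ k, bern3 p q (α k) := by
  simp [weight, List.prod_ofFn]

lemma bern3_nonneg (hp : 0 ≤ p) (hq : 0 ≤ q) (hpq : p + q ≤ 1) (a : Fin 3) : 0 ≤ bern3 p q a := by
  fin_cases a <;> simp [bern3] <;> linarith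

lemma weight_nonneg (hp : 0 ≤ p) (hq : 0 ≤ q) (hpq : p + q ≤ 1) (u : List (Fin 3)) :
    0 ≤ weight p q u :=
  List.prod_nonneg fun _ ha => by
    obtain ⟨a, -, rfl⟩ := List.mem_map.1 ha
    exact bern3_nonneg hp hq hpq a

lemma sum_bern3 (p q : ℝ) : ∑ a, bern3 p q a = 1 := by
  simp [Fin.sum_univ_three, bern3]

def overlapPgf (p q r s t : ℝ) : ℝ :=
  ∑ a, ∑ b, bern3 p q a * bern3 r s b * t ^ overlap a b

lemma overlapPgf_eq (p q r s t : ℝ) : overlapPgf p q r s t =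
    (p * s + q * r) + (1 - (p * s + q * r) - (1 - p - q) * (1 - r - s)) * t +
      (1 - p - q) * (1 - r - s) * t ^ 2 := by
  simp [overlapPgf, Fin.sum_univ_three, bern3, overlap]
  ring

-- `E[t ^ #(common x y n)]` under `μ_{p,q} ⊗ μ_{r,s}`, as a sum over pairs of prefix cylinders.
def commonPgf (p q r s : ℝ) (n : ℕ) (t : ℝ) : ℝ :=
  ∑ u ∈ codePrefixes n, ∑ v ∈ codePrefixes n,
    weight p q u * weight r s v * t ^ (common (toCode u) (toCode v) n).card

lemma commonPgf_zero (p q r s t : ℝ) : commonPgf p q r s 0 t = t := by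
  simp [commonPgf, codePrefixes, weight, common, level, levels]

lemma sum_sum_weight_mul_pow_card_common (hu : u ∈ codePrefixes n) (hv : v ∈ codePrefixes n)
    (t : ℝ) :
    ∑ α : Fin (level (toCode u) n).length → Fin 3, ∑ β : Fin (level (toCode v) n).length → Fin 3,
      weight p q (u ++ List.ofFn α) * weight r s (v ++ List.ofFn β) *
        t ^ (common (toCode (u ++ List.ofFn α)) (toCode (v ++ List.ofFn β)) (n + 1)).card
      = weight p q u * weight r s v *
          overlapPgf p q r s t ^ (common (toCode u) (toCode v) n).card := by
  set C := common (toCode u) (toCode v) n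
  have hCu (σ : C) : σ.1 ∈ level (toCode u) n := List.mem_toFinset.1 (mem_inter.1 σ.2).1
  have hCv (σ : C) : σ.1 ∈ level (toCode v) n := List.mem_toFinset.1 (mem_inter.1 σ.2).2
  set iu : C → Fin (level (toCode u) n).length := fun σ => indexIn _ ⟨σ, hCu σ⟩
  set iv : C → Fin (level (toCode v) n).length := fun σ => indexIn _ ⟨σ, hCv σ⟩
  have hiu : Set.InjOn iu C.attach := fun σ _ σ' _ h =>
    Subtype.ext (Subtype.mk.inj (indexIn_injective (level (toCode u) n) h))
  have hiv : Set.InjOn iv C.attach := fun σ _ σ' _ h =>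
    Subtype.ext (Subtype.mk.inj (indexIn_injective (level (toCode v) n) h))
  have hcard (α β) : (common (toCode (u ++ List.ofFn α)) (toCode (v ++ List.ofFn β)) (n + 1)).card
      = ∑ σ ∈ C.attach, overlap (α (iu σ)) (β (iv σ)) := by
    rw [card_common_succ, common_eq_of_mem_codePrefixes hu hv
      (toCode_append_mem_codeCylinder u _) (toCode_append_mem_codeCylinder v _), ← sum_attach]
    exact sum_congr rfl fun σ _ => by
      rw [code_toCode_append hu (hCu σ), code_toCode_append hv (hCv σ)]
  calc _ = ∑ α : Fin (level (toCode u) n).length → Fin 3,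
        ∑ β : Fin (level (toCode v) n).length → Fin 3, weight p q u * weight r s v *
          ((∏ k, bern3 p q (α k)) * (∏ k, bern3 r s (β k)) *
            ∏ σ ∈ C.attach, t ^ overlap (α (iu σ)) (β (iv σ))) := by
        refine sum_congr rfl fun α _ => sum_congr rfl fun β _ => ?_
        rw [weight_append_ofFn, weight_append_ofFn, hcard, prod_pow_eq_pow_sum]
        ring
    _ = _ := by
        simp_rw [← mul_sum]
        rw [sum_sum_prod_mul_prod_comp (sum_bern3 p q) (sum_bern3 r s) _ hiu hiv
          (fun a b => t ^ overlap a b), card_attach]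
        rfl

lemma commonPgf_succ (p q r s : ℝ) (n : ℕ) (t : ℝ) :
    commonPgf p q r s (n + 1) t = commonPgf p q r s n (overlapPgf p q r s t) := by
  simp_rw [commonPgf, sum_codePrefixes_succ]
  refine sum_congr rfl fun u hu => ?_
  rw [sum_comm]
  exact sum_congr rfl fun v hv => sum_sum_weight_mul_pow_card_common hu hv t

lemma commonPgf_eq_iterate (p q r s : ℝ) (n : ℕ) (t : ℝ) :
    commonPgf p q r s n t = (overlapPgf p q r s)^[n] t := by
  induction n generalizing t with
  | zero => exact commonPgf_zero p q r s t
  | succ n ih => rw [commonPgf_succ, ih, Function.iterate_succ_apply]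

lemma measurableSet_codeCylinder (u : List (Fin 3)) : MeasurableSet (codeCylinder u) := by
  simp only [codeCylinder, Set.ofPred_forall]
  exact MeasurableSet.iInter fun i => measurableSet_eq_fun (measurable_pi_apply _) measurable_const

lemma measure_biUnion_prod_codeCylinder (μ ν : Measure (ℕ → Fin 3)) [SFinite ν]
    {S : Finset (List (Fin 3) × List (Fin 3))} (hS : S ⊆ codePrefixes n ×ˢ codePrefixes n) :
    (μ.prod ν) (⋃ w ∈ S, codeCylinder w.1 ×ˢ codeCylinder w.2) =
      ∑ w ∈ S, μ (codeCylinder w.1) * ν (codeCylinder w.2) := by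
  rw [measure_biUnion_finset]
  · exact sum_congr rfl fun w _ => Measure.prod_prod _ _
  · intro w hw w' hw' hne
    refine Set.disjoint_left.2 fun xy hxy hxy' => hne ?_
    obtain ⟨hu, hv⟩ := mem_product.1 (hS hw)
    obtain ⟨hu', hv'⟩ := mem_product.1 (hS hw')
    exact Prod.ext (eq_of_mem_codePrefixes hu hu' hxy.1 hxy'.1)
      (eq_of_mem_codePrefixes hv hv' hxy.2 hxy'.2)
  · exact fun w _ => (measurableSet_codeCylinder _).prod (measurableSet_codeCylinder _)

lemma setOf_common_eq_empty (n : ℕ) :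
    {xy : (ℕ → Fin 3) × (ℕ → Fin 3) | common xy.1 xy.2 n = ∅} =
      ⋃ w ∈ (codePrefixes n ×ˢ codePrefixes n).filter
        (fun w => common (toCode w.1) (toCode w.2) n = ∅),
        codeCylinder w.1 ×ˢ codeCylinder w.2 := by
  ext ⟨x, y⟩
  obtain ⟨u, hu, hx⟩ := exists_mem_codePrefixes x n
  obtain ⟨v, hv, hy⟩ := exists_mem_codePrefixes y n
  simp only [Set.mem_ofPred_eq, Set.mem_iUnion, mem_filter, mem_product, Set.mem_prod,
    exists_prop, Prod.exists]
  constructor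
  · intro h
    exact ⟨u, v, ⟨⟨hu, hv⟩, common_eq_of_mem_codePrefixes hu hv hx hy ▸ h⟩, hx, hy⟩
  · rintro ⟨u', v', ⟨⟨hu', hv'⟩, h⟩, hx', hy'⟩
    rwa [common_eq_of_mem_codePrefixes hu' hv' hx' hy']

lemma commonPgf_zero_eq_sum (p q r s : ℝ) (n : ℕ) :
    commonPgf p q r s n 0 = ∑ w ∈ (codePrefixes n ×ˢ codePrefixes n).filter
      (fun w => common (toCode w.1) (toCode w.2) n = ∅), weight p q w.1 * weight r s w.2 := by
  rw [commonPgf, ← sum_product', sum_filter]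
  refine sum_congr rfl fun w _ => ?_
  split_ifs with h
  · rw [h, card_empty, pow_zero, mul_one]
  · rw [zero_pow (card_ne_zero.2 (nonempty_iff_ne_empty.2 h)), mul_zero]

lemma measure_setOf_common_eq_empty (hp : 0 ≤ p) (hq : 0 ≤ q) (hr : 0 ≤ r) (hs : 0 ≤ s)
    (hpq : p + q ≤ 1) (hrs : r + s ≤ 1) {μ ν : Measure (ℕ → Fin 3)}
    (hμ : IsBernoulliMeasure p q μ) (hν : IsBernoulliMeasure r s ν) (n : ℕ) :
    (μ.prod ν) {xy | common xy.1 xy.2 n = ∅} = ENNReal.ofReal (commonPgf p q r s n 0) := by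
  have := hν.1
  rw [setOf_common_eq_empty, measure_biUnion_prod_codeCylinder μ ν (filter_subset _ _),
    commonPgf_zero_eq_sum, ENNReal.ofReal_sum_of_nonneg fun w _ =>
      mul_nonneg (weight_nonneg hp hq hpq _) (weight_nonneg hr hs hrs _)]
  refine sum_congr rfl fun w _ => ?_
  rw [ENNReal.ofReal_mul (weight_nonneg hp hq hpq _)]
  exact congrArg₂ _ (hμ.2 w.1) (hν.2 w.2)

lemma tendsto_iterate_overlapPgf {p q r s : ℝ} (hp : 0 ≤ p) (hq : 0 ≤ q) (hr : 0 ≤ r) (hs : 0 ≤ s)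
    (hpq : p + q ≤ 1) (hrs : r + s ≤ 1) (hkey : p + q + r + s < 1 + p * r + q * s) :
    Tendsto (fun n => (overlapPgf p q r s)^[n] 0) atTop
      (𝓝 ((p * s + q * r) / ((1 - p - q) * (1 - r - s)))) := by
  rw [funext (overlapPgf_eq p q r s)]
  refine tendsto_iterate_quadratic (by positivity) (by nlinarith) ?_
  nlinarith [mul_nonneg (add_nonneg hp hq) (sub_nonneg.2 hrs),
    mul_nonneg (add_nonneg hr hs) (sub_nonneg.2 hpq), mul_nonneg hp hr, mul_nonneg hq hs]

end CodedTree

open CodedTree in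
/-- For `p,q,r,s ≥ 0` with `p+q ≤ 1`, `r+s ≤ 1`, and
`p+q+r+s < 1 + pr + qs`, the `(μ_{⟨p,q⟩} ⊗ μ_{⟨r,s⟩})`-measure of the event
`[T_x] ∩ [T_y] = ∅` equals `(ps + qr) / ((1-p-q)(1-r-s))`. -/
theorem stmt4 (p q r s : ℝ) (hp : 0 ≤ p) (hq : 0 ≤ q) (hr : 0 ≤ r) (hs : 0 ≤ s)
    (hpq : p + q ≤ 1) (hrs : r + s ≤ 1)
    (hkey : p + q + r + s < 1 + p * r + q * s)
    (μ ν : Measure (ℕ → Fin 3))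
    (hμ : IsBernoulliMeasure p q μ) (hν : IsBernoulliMeasure r s ν) :
    (μ.prod ν) {xy : (ℕ → Fin 3) × (ℕ → Fin 3) |
        pathsOf (treeOf xy.1) ∩ pathsOf (treeOf xy.2) = ∅} =
      ENNReal.ofReal ((p * s + q * r) / ((1 - p - q) * (1 - r - s))) := by
  have hdisjoint : {xy : (ℕ → Fin 3) × (ℕ → Fin 3) |
      pathsOf (treeOf xy.1) ∩ pathsOf (treeOf xy.2) = ∅} =
        ⋃ n, {xy | common xy.1 xy.2 n = ∅} := by
    ext
    simp [pathsOf_inter_eq_empty_iff]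
  have hmono : Monotone fun n => {xy : (ℕ → Fin 3) × (ℕ → Fin 3) | common xy.1 xy.2 n = ∅} :=
    monotone_nat_of_le_succ fun n _ => common_succ_eq_empty
  have hlim := tendsto_measure_iUnion_atTop (μ := μ.prod ν) hmono
  simp only [Function.comp_def, measure_setOf_common_eq_empty hp hq hr hs hpq hrs hμ hν,
    commonPgf_eq_iterate] at hlim
  rw [hdisjoint]
  exact tendsto_nhds_unique hlim <| (ENNReal.continuous_ofReal.tendsto _).comp
    (tendsto_iterate_overlapPgf hp hq hr hs hpq hrs hkey)
end

section
/- Let β₀, β₁ ∈ (0,1) with β₀ + β₁ ≥ 1. Then P_{β₀,β₁}({ω ∈ Ω : Tree(ω) is infinite}) = (a₂ − a₃)/a₂ = (β₀ + β₁ − 1)/(β₀β₁). -/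
open MeasureTheory

/-- The Galton–Watson tree of `ω`: all binary strings all of whose nonempty prefixes survive. -/
def gwTree (ω : {σ : List Bool // σ ≠ []} → Bool) : Set (List Bool) :=
  {σ | ∀ τ : {σ : List Bool // σ ≠ []}, τ.val <+: σ → ω τ = true}

/-- The pruned tree: nodes of the Galton–Watson tree above which the tree is infinite
(has infinitely many extensions in the tree). -/
def gwPrune (ω : {σ : List Bool // σ ≠ []} → Bool) : Set (List Bool) :=
  {σ | σ ∈ gwTree ω ∧ {τ | σ <+: τ ∧ τ ∈ gwTree ω}.Infinite}

/-- Probability that coordinate `σ` takes value `b`: it is `1` (survives) with probability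
`β₀` if the last bit of `σ` is `0`, and `β₁` if the last bit of `σ` is `1`. -/
def gwP (β₀ β₁ : ℝ) (σ : {σ : List Bool // σ ≠ []}) (b : Bool) : ℝ :=
  if b then (if σ.val.getLast σ.prop = false then β₀ else β₁)
  else 1 - (if σ.val.getLast σ.prop = false then β₀ else β₁)

/-- `P` is the product measure `P_{β₀,β₁}`: a probability measure with independent coordinates,
coordinate `σ` equal to `1` with probability `β₀` or `β₁` according to the last bit of `σ`,
as expressed by its finite-dimensional distributions. -/
def IsGWMeasure (β₀ β₁ : ℝ) (P : Measure ({σ : List Bool // σ ≠ []} → Bool)) : Prop :=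
  IsProbabilityMeasure P ∧
    ∀ (S : Finset {σ : List Bool // σ ≠ []}) (f : {σ : List Bool // σ ≠ []} → Bool),
      P {ω | ∀ σ ∈ S, ω σ = f σ} = ENNReal.ofReal (∏ σ ∈ S, gwP β₀ β₁ σ (f σ))

/-!
Whether the child `σ ++ [b]` of a vertex `σ` is present is decided by an independent coin of
bias `β_b`, whatever `σ` is, so `Tree(ω)` is a Galton–Watson tree with offspring generating
function `f x = (1 - β₀ + β₀ x) (1 - β₁ + β₁ x)`. The subtrees above `[0]` and `[1]` depend on
disjoint sets of coordinates and are again distributed according to `P_{β₀,β₁}`, so the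
probability `q n` that the tree has no vertex of length `n` satisfies `q 0 = 0` and
`q (n + 1) = f (q n)`. Hence `q n` increases to the least fixed point of `f` on `[0, ∞)`. Since
`f x - x = (x - 1) (β₀ β₁ x - (1 - β₀) (1 - β₁))` and `β₀ + β₁ ≥ 1`, this fixed point is
`(1 - β₀) (1 - β₁) / (β₀ β₁)`, and the tree is infinite with the complementary probability.
-/

open ProbabilityTheory Filter Topology

section CoordinateIndependence

variable {ι : Type*} {X : ι → Type*} [∀ i, MeasurableSpace (X i)]

theorem iIndepFun_eval_of_measure_cylinder
    [∀ i, MeasurableSingletonClass (X i)] [∀ i, Countable (X i)]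
    (P : Measure (Π i, X i)) [IsProbabilityMeasure P]
    (h : ∀ (S : Finset ι) (x : Π i, X i),
      P {ω | ∀ i ∈ S, ω i = x i} = ∏ i ∈ S, P {ω | ω i = x i}) :
    iIndepFun (fun i ω ↦ ω i) P := by
  classical
  obtain ⟨ω₀⟩ : Nonempty (Π i, X i) := nonempty_of_isProbabilityMeasure P
  refine iIndepFun_iff_finset.2 fun S ↦ ?_
  change iIndepFun (fun (i : S) ω ↦ ω i) P
  rw [iIndepFun_iff_map_fun_eq_pi_map fun i ↦ (measurable_pi_apply _).aemeasurable]
  refine Measure.ext_of_singleton fun g ↦ ?_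
  let x : Π i, X i := fun i ↦ if hi : i ∈ S then g ⟨i, hi⟩ else ω₀ i
  have hx (i : S) : g i = x i := by simp [x]
  rw [Measure.pi_singleton, Measure.map_apply (by fun_prop) (measurableSet_singleton g)]
  simp_rw [Measure.map_apply (measurable_pi_apply _) (measurableSet_singleton _)]
  convert h S x using 1
  · congr 1; ext ω; simp [funext_iff, hx]
  · rw [← Finset.prod_coe_sort S]
    simp only [Finset.univ_eq_attach, hx]
    rfl

abbrev coordMeasurableSpace (S : Set ι) : MeasurableSpace (Π i, X i) :=
  ⨆ i ∈ S, MeasurableSpace.comap (fun ω ↦ ω i) inferInstance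

theorem measurable_eval_coordMeasurableSpace {S : Set ι} {i : ι} (hi : i ∈ S) :
    Measurable[coordMeasurableSpace S] (fun ω : Π i, X i ↦ ω i) :=
  Measurable.of_comap_le <| le_iSup₂ (f := fun j (_ : j ∈ S) ↦
    MeasurableSpace.comap (fun ω : Π i, X i ↦ ω j) inferInstance) i hi

theorem measurableSet_eval_eq_coordMeasurableSpace [∀ i, MeasurableSingletonClass (X i)]
    {S : Set ι} {i : ι} (hi : i ∈ S) (c : X i) :
    MeasurableSet[coordMeasurableSpace S] {ω : Π i, X i | ω i = c} :=
  measurable_eval_coordMeasurableSpace hi (measurableSet_singleton c)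

theorem indep_coordMeasurableSpace {P : Measure (Π i, X i)} (hP : iIndepFun (fun i ω ↦ ω i) P)
    {S T : Set ι} (hST : Disjoint S T) :
    Indep (coordMeasurableSpace S) (coordMeasurableSpace T) P :=
  indep_iSup_of_disjoint (fun i ↦ (measurable_pi_apply i).comap_le)
    ((iIndepFun_iff_iIndep _ _ _).1 hP) hST

end CoordinateIndependence

section LeastFixedPoint

variable {f : ℝ → ℝ} {a L : ℝ}

theorem iterate_mem_Icc_of_isLeast_fixedPt (hf : MonotoneOn f (Set.Icc a L)) (ha : a ≤ f a)
    (hL : IsLeast {x | a ≤ x ∧ f x = x} L) (n : ℕ) : f^[n] a ∈ Set.Icc a L := by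
  induction n with
  | zero => exact ⟨le_rfl, hL.1.1⟩
  | succ n ih =>
    rw [Function.iterate_succ_apply']
    exact ⟨ha.trans (hf ⟨le_rfl, hL.1.1⟩ ih ih.1), hL.1.2 ▸ hf ih ⟨hL.1.1, le_rfl⟩ ih.2⟩

theorem monotone_iterate_of_isLeast_fixedPt (hf : MonotoneOn f (Set.Icc a L)) (ha : a ≤ f a)
    (hL : IsLeast {x | a ≤ x ∧ f x = x} L) : Monotone fun n ↦ f^[n] a := by
  have hmem := iterate_mem_Icc_of_isLeast_fixedPt hf ha hL
  refine monotone_nat_of_le_succ fun n ↦ ?_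
  induction n with
  | zero => exact ha
  | succ n ih =>
    rw [Function.iterate_succ_apply', Function.iterate_succ_apply' _ (n + 1)]
    exact hf (hmem n) (hmem (n + 1)) ih

theorem tendsto_iterate_of_isLeast_fixedPt (hf : MonotoneOn f (Set.Icc a L))
    (hcont : Continuous f) (ha : a ≤ f a) (hL : IsLeast {x | a ≤ x ∧ f x = x} L) :
    Tendsto (fun n ↦ f^[n] a) atTop (𝓝 L) := by
  have hmem := iterate_mem_Icc_of_isLeast_fixedPt hf ha hL
  have hbdd : BddAbove (Set.range fun n ↦ f^[n] a) :=
    ⟨L, Set.forall_mem_range.2 fun n ↦ (hmem n).2⟩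
  have hlim := tendsto_atTop_ciSup (monotone_iterate_of_isLeast_fixedPt hf ha hL) hbdd
  have hfix := isFixedPt_of_tendsto_iterate hlim hcont.continuousAt
  have hle : ⨆ n, f^[n] a ≤ L := ciSup_le fun n ↦ (hmem n).2
  have hge : L ≤ ⨆ n, f^[n] a := hL.2 ⟨(hmem 0).1.trans (le_ciSup hbdd 0), hfix⟩
  rwa [le_antisymm hle hge] at hlim

end LeastFixedPoint

namespace GaltonWatson

abbrev Vertex := {σ : List Bool // σ ≠ []}

def single (b : Bool) : Vertex := ⟨[b], List.cons_ne_nil _ _⟩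

def cons (b : Bool) (σ : Vertex) : Vertex := ⟨b :: σ.1, List.cons_ne_nil _ _⟩

theorem cons_injective (b : Bool) : Function.Injective (cons b) :=
  fun _ _ h ↦ Subtype.ext (List.cons_injective (congrArg Subtype.val h))

def subtree (b : Bool) (ω : Vertex → Bool) : Vertex → Bool := fun σ ↦ ω (cons b σ)

def extinctBy (n : ℕ) : Set (Vertex → Bool) := {ω | ∀ σ ∈ gwTree ω, σ.length < n}

def childExtinctBy (b : Bool) (n : ℕ) : Set (Vertex → Bool) :=
  {ω | ω (single b) = true → subtree b ω ∈ extinctBy n}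

theorem nil_mem_gwTree (ω : Vertex → Bool) : [] ∈ gwTree ω :=
  fun τ hτ ↦ absurd (List.prefix_nil.mp hτ) τ.2

theorem cons_mem_gwTree {ω : Vertex → Bool} {b : Bool} {τ : List Bool} :
    b :: τ ∈ gwTree ω ↔ ω (single b) = true ∧ τ ∈ gwTree (subtree b ω) := by
  refine ⟨fun h ↦ ⟨h (single b) ⟨τ, rfl⟩,
    fun ρ hρ ↦ h (cons b ρ) ((List.prefix_cons_inj b).2 hρ)⟩, ?_⟩
  rintro ⟨hb, hτ⟩ ⟨_ | ⟨a, ρ⟩, hρ⟩ hpre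
  · exact absurd rfl hρ
  obtain ⟨rfl, hρτ⟩ := List.cons_prefix_cons.mp hpre
  rcases ρ with _ | ⟨c, ρ⟩
  · exact hb
  · exact hτ ⟨c :: ρ, List.cons_ne_nil _ _⟩ hρτ

theorem extinctBy_zero : extinctBy 0 = ∅ :=
  Set.eq_empty_of_forall_notMem fun ω h ↦ Nat.not_lt_zero _ (h [] (nil_mem_gwTree ω))

theorem extinctBy_succ (n : ℕ) :
    extinctBy (n + 1) = childExtinctBy false n ∩ childExtinctBy true n := by
  have key (ω : Vertex → Bool) : ω ∈ extinctBy (n + 1) ↔ ∀ b, ω ∈ childExtinctBy b n := by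
    simp only [extinctBy, childExtinctBy, Set.mem_ofPred_eq]
    constructor
    · intro h b hb τ hτ
      simpa using h (b :: τ) (cons_mem_gwTree.2 ⟨hb, hτ⟩)
    · rintro h (_ | ⟨b, τ⟩) hσ
      · exact Nat.succ_pos n
      · obtain ⟨hb, hτ⟩ := cons_mem_gwTree.1 hσ
        simpa using h b hb τ hτ
  ext ω
  simp [key, Bool.forall_bool]

theorem monotone_extinctBy : Monotone extinctBy :=
  fun _ _ hmn _ h σ hσ ↦ (h σ hσ).trans_le hmn

theorem setOf_gwTree_infinite :
    {ω | (gwTree ω).Infinite} = (⋃ n, extinctBy n)ᶜ := by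
  ext ω
  simp only [Set.mem_ofPred_eq, Set.mem_compl_iff, Set.mem_iUnion, not_exists]
  constructor
  · intro hinf n hn
    exact hinf ((List.finite_length_lt Bool n).subset hn)
  · intro h hfin
    obtain ⟨N, hN⟩ := (hfin.image List.length).bddAbove
    exact h (N + 1) fun σ hσ ↦ Nat.lt_succ_of_le (hN ⟨σ, hσ, rfl⟩)

theorem measurableSet_mem_gwTree (σ : List Bool) :
    MeasurableSet {ω : Vertex → Bool | σ ∈ gwTree ω} := by
  rw [show {ω : Vertex → Bool | σ ∈ gwTree ω} = ⋂ τ : Vertex, {ω | τ.1 <+: σ → ω τ = true} by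
    ext; simp [gwTree]]
  exact MeasurableSet.iInter fun τ ↦
    (MeasurableSet.const _).imp (measurableSet_eq_fun (measurable_pi_apply τ) measurable_const)

theorem measurableSet_extinctBy (n : ℕ) : MeasurableSet (extinctBy n) := by
  simp only [extinctBy, Set.ofPred_forall]
  exact MeasurableSet.iInter fun σ ↦ (measurableSet_mem_gwTree σ).imp (MeasurableSet.const _)

variable {β₀ β₁ : ℝ}

theorem gwP_nonneg (h0 : β₀ ∈ Set.Icc 0 1) (h1 : β₁ ∈ Set.Icc 0 1) (σ : Vertex) (c : Bool) :
    0 ≤ gwP β₀ β₁ σ c := by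
  unfold gwP
  split_ifs <;> linarith [h0.1, h0.2, h1.1, h1.2]

theorem gwP_cons (b : Bool) (σ : Vertex) (c : Bool) :
    gwP β₀ β₁ (cons b σ) c = gwP β₀ β₁ σ c := by
  simp only [gwP, cons, List.getLast_cons σ.2]

theorem gwP_single_true (b : Bool) : gwP β₀ β₁ (single b) true = cond b β₁ β₀ := by
  cases b <;> rfl

theorem gwP_single_false (b : Bool) : gwP β₀ β₁ (single b) false = 1 - cond b β₁ β₀ := by
  cases b <;> rfl

theorem measurable_subtree (b : Bool) : Measurable (subtree b) :=
  measurable_pi_lambda _ fun σ ↦ measurable_pi_apply (cons b σ)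

theorem measurable_subtree_coordMeasurableSpace {b : Bool} {S : Set Vertex}
    (hS : ∀ σ, cons b σ ∈ S) : Measurable[coordMeasurableSpace S] (subtree b) :=
  @measurable_pi_lambda _ _ _ (coordMeasurableSpace S) _ _ fun σ ↦
    measurable_eval_coordMeasurableSpace (hS σ)

end GaltonWatson

namespace IsGWMeasure

open GaltonWatson

variable {β₀ β₁ : ℝ} {P : Measure (Vertex → Bool)}

theorem measure_eval_eq (hP : IsGWMeasure β₀ β₁ P) (σ : Vertex) (c : Bool) :
    P {ω | ω σ = c} = ENNReal.ofReal (gwP β₀ β₁ σ c) := by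
  simpa using hP.2 {σ} fun _ ↦ c

theorem iIndepFun_eval (hP : IsGWMeasure β₀ β₁ P) (h0 : β₀ ∈ Set.Icc 0 1)
    (h1 : β₁ ∈ Set.Icc 0 1) : iIndepFun (fun σ ω ↦ ω σ) P := by
  have := hP.1
  refine iIndepFun_eval_of_measure_cylinder P fun S x ↦ ?_
  rw [hP.2, ENNReal.ofReal_prod_of_nonneg fun σ _ ↦ gwP_nonneg h0 h1 σ (x σ)]
  simp only [hP.measure_eval_eq]

theorem map_subtree (hP : IsGWMeasure β₀ β₁ P) (b : Bool) :
    IsGWMeasure β₀ β₁ (P.map (subtree b)) := by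
  have := hP.1
  refine ⟨Measure.isProbabilityMeasure_map (measurable_subtree b).aemeasurable, fun S f ↦ ?_⟩
  let f' : Vertex → Bool := Function.extend (cons b) f fun _ ↦ false
  have hf' (σ : Vertex) : f' (cons b σ) = f σ := (cons_injective b).extend_apply _ _ σ
  have hpre : subtree b ⁻¹' {ω | ∀ σ ∈ S, ω σ = f σ}
      = {ω | ∀ τ ∈ S.map ⟨cons b, cons_injective b⟩, ω τ = f' τ} := by
    ext ω
    simp only [Set.mem_preimage, Set.mem_ofPred_eq, Finset.forall_mem_map,
      Function.Embedding.coeFn_mk, subtree, hf']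
  have hS : MeasurableSet {ω : Vertex → Bool | ∀ σ ∈ S, ω σ = f σ} := by measurability
  rw [Measure.map_apply (measurable_subtree b) hS, hpre, hP.2, Finset.prod_map]
  simp [hf', gwP_cons]

end IsGWMeasure

namespace GaltonWatson

variable {β₀ β₁ : ℝ} {P : Measure (Vertex → Bool)}

theorem measure_childExtinctBy (hP : IsGWMeasure β₀ β₁ P) (h0 : β₀ ∈ Set.Icc 0 1)
    (h1 : β₁ ∈ Set.Icc 0 1) (b : Bool) (n : ℕ) :
    P (childExtinctBy b n) = ENNReal.ofReal (1 - cond b β₁ β₀)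
      + ENNReal.ofReal (cond b β₁ β₀) * P.map (subtree b) (extinctBy n) := by
  have hsplit : childExtinctBy b n = {ω | ω (single b) = false}
      ∪ ({ω | ω (single b) = true} ∩ subtree b ⁻¹' extinctBy n) := by
    ext ω; cases h : ω (single b) <;> simp [childExtinctBy, h]
  have hdisj : Disjoint {single b} (Set.range (cons b)) := by
    simp only [Set.disjoint_singleton_left, Set.mem_range, not_exists]
    intro σ h
    exact σ.2 (List.cons_injective (congrArg Subtype.val h))
  have hroot := measurableSet_eval_eq_coordMeasurableSpace (X := fun _ ↦ Bool)
    (Set.mem_singleton (single b)) true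
  have hsub : MeasurableSet[coordMeasurableSpace (Set.range (cons b))]
      (subtree b ⁻¹' extinctBy n) :=
    measurable_subtree_coordMeasurableSpace Set.mem_range_self (measurableSet_extinctBy n)
  have hindep := indep_coordMeasurableSpace (hP.iIndepFun_eval h0 h1) hdisj
  rw [hsplit, measure_union, (Indep_iff _ _ _).1 hindep _ _ hroot hsub, hP.measure_eval_eq,
    hP.measure_eval_eq, gwP_single_true, gwP_single_false,
    Measure.map_apply (measurable_subtree b) (measurableSet_extinctBy n)]
  · exact Set.disjoint_left.2 fun ω hf ht ↦ by simp_all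
  · exact (measurableSet_eq_fun (measurable_pi_apply _) measurable_const).inter
      (measurable_subtree b (measurableSet_extinctBy n))

theorem measurableSet_childExtinctBy (b : Bool) (n : ℕ) :
    MeasurableSet[coordMeasurableSpace {σ : Vertex | σ.1.head? = some b}]
      (childExtinctBy b n) := by
  have hroot : single b ∈ {σ : Vertex | σ.1.head? = some b} := rfl
  have hsub (σ : Vertex) : cons b σ ∈ {σ : Vertex | σ.1.head? = some b} := rfl
  exact (measurableSet_eval_eq_coordMeasurableSpace (X := fun _ ↦ Bool) hroot true).imp
    (measurable_subtree_coordMeasurableSpace hsub (measurableSet_extinctBy n))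

theorem measure_extinctBy_succ (hP : IsGWMeasure β₀ β₁ P) (h0 : β₀ ∈ Set.Icc 0 1)
    (h1 : β₁ ∈ Set.Icc 0 1) (n : ℕ) :
    P (extinctBy (n + 1)) = P (childExtinctBy false n) * P (childExtinctBy true n) := by
  have hdisj : Disjoint {σ : Vertex | σ.1.head? = some false} {σ | σ.1.head? = some true} :=
    Set.disjoint_left.2 fun σ hf ht ↦ by simp_all
  rw [extinctBy_succ]
  exact (Indep_iff _ _ _).1 (indep_coordMeasurableSpace (hP.iIndepFun_eval h0 h1) hdisj) _ _
    (measurableSet_childExtinctBy false n) (measurableSet_childExtinctBy true n)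

def offspringPGF (β₀ β₁ : ℝ) (x : ℝ) : ℝ := (1 - β₀ + β₀ * x) * (1 - β₁ + β₁ * x)

theorem mapsTo_offspringPGF (h0 : β₀ ∈ Set.Icc 0 1) (h1 : β₁ ∈ Set.Icc 0 1) :
    Set.MapsTo (offspringPGF β₀ β₁) (Set.Ici 0) (Set.Ici 0) := by
  intro x (hx : 0 ≤ x)
  have := h0.2; have := h1.2
  have := mul_nonneg h0.1 hx; have := mul_nonneg h1.1 hx
  show 0 ≤ (1 - β₀ + β₀ * x) * (1 - β₁ + β₁ * x)
  exact mul_nonneg (by linarith) (by linarith)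

theorem monotoneOn_offspringPGF (h0 : β₀ ∈ Set.Icc 0 1) (h1 : β₁ ∈ Set.Icc 0 1) :
    MonotoneOn (offspringPGF β₀ β₁) (Set.Ici 0) := by
  intro x hx y hy hxy
  have := h0.2; have := h1.2
  have := mul_nonneg h0.1 (Set.mem_Ici.1 hx); have := mul_nonneg h1.1 (Set.mem_Ici.1 hx)
  unfold offspringPGF
  gcongr
  · linarith [mul_le_mul_of_nonneg_left hxy h0.1]
  · exact h0.1
  · exact h1.1

theorem isLeast_fixedPt_offspringPGF (h0 : β₀ ∈ Set.Ioo 0 1) (h1 : β₁ ∈ Set.Ioo 0 1)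
    (hsum : 1 ≤ β₀ + β₁) :
    IsLeast {x | 0 ≤ x ∧ offspringPGF β₀ β₁ x = x} ((1 - β₀) * (1 - β₁) / (β₀ * β₁)) := by
  obtain ⟨hβ₀, hβ₀'⟩ := h0
  obtain ⟨hβ₁, hβ₁'⟩ := h1
  have hβ : 0 < β₀ * β₁ := mul_pos hβ₀ hβ₁
  refine ⟨⟨div_nonneg (mul_nonneg (by linarith) (by linarith)) hβ.le, ?_⟩, ?_⟩
  · unfold offspringPGF
    field_simp
    ring
  · rintro x ⟨hx, hfx⟩
    have hroots : (x - 1) * (β₀ * β₁ * x - (1 - β₀) * (1 - β₁)) = 0 := by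
      unfold offspringPGF at hfx
      linear_combination hfx
    rcases mul_eq_zero.1 hroots with h | h
    · rw [div_le_iff₀ hβ]
      nlinarith
    · rw [div_le_iff₀ hβ]
      linarith

theorem measure_extinctBy (h0 : β₀ ∈ Set.Icc 0 1) (h1 : β₁ ∈ Set.Icc 0 1) (n : ℕ) :
    ∀ P : Measure (Vertex → Bool), IsGWMeasure β₀ β₁ P →
      P (extinctBy n) = ENNReal.ofReal ((offspringPGF β₀ β₁)^[n] 0) := by
  induction n with
  | zero => simp [extinctBy_zero]
  | succ n ih =>
    intro P hP
    have hq : 0 ≤ (offspringPGF β₀ β₁)^[n] 0 :=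
      (mapsTo_offspringPGF h0 h1).iterate n Set.self_mem_Ici
    have hfactor {β : ℝ} (hβ : β ∈ Set.Icc 0 1) : ENNReal.ofReal (1 - β) + ENNReal.ofReal β *
        ENNReal.ofReal ((offspringPGF β₀ β₁)^[n] 0)
          = ENNReal.ofReal (1 - β + β * (offspringPGF β₀ β₁)^[n] 0) := by
      rw [← ENNReal.ofReal_mul hβ.1, ← ENNReal.ofReal_add (by linarith [hβ.2])
        (mul_nonneg hβ.1 hq)]
    rw [measure_extinctBy_succ hP h0 h1, measure_childExtinctBy hP h0 h1,
      measure_childExtinctBy hP h0 h1, ih _ (hP.map_subtree false), ih _ (hP.map_subtree true),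
      Function.iterate_succ_apply', cond_false, cond_true, hfactor h0, hfactor h1,
      ← ENNReal.ofReal_mul (by linarith [h0.2, mul_nonneg h0.1 hq])]
    rfl

theorem tendsto_iterate_offspringPGF (h0 : β₀ ∈ Set.Ioo 0 1) (h1 : β₁ ∈ Set.Ioo 0 1)
    (hsum : 1 ≤ β₀ + β₁) :
    Tendsto (fun n ↦ (offspringPGF β₀ β₁)^[n] 0) atTop
      (𝓝 ((1 - β₀) * (1 - β₁) / (β₀ * β₁))) :=
  tendsto_iterate_of_isLeast_fixedPt
    ((monotoneOn_offspringPGF (Set.Ioo_subset_Icc_self h0) (Set.Ioo_subset_Icc_self h1)).mono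
      Set.Icc_subset_Ici_self)
    (by unfold offspringPGF; fun_prop)
    (mapsTo_offspringPGF (Set.Ioo_subset_Icc_self h0) (Set.Ioo_subset_Icc_self h1)
      Set.self_mem_Ici)
    (isLeast_fixedPt_offspringPGF h0 h1 hsum)

theorem measure_iUnion_extinctBy (hP : IsGWMeasure β₀ β₁ P) (h0 : β₀ ∈ Set.Ioo 0 1)
    (h1 : β₁ ∈ Set.Ioo 0 1) (hsum : 1 ≤ β₀ + β₁) :
    P (⋃ n, extinctBy n) = ENNReal.ofReal ((1 - β₀) * (1 - β₁) / (β₀ * β₁)) := by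
  refine tendsto_nhds_unique (tendsto_measure_iUnion_atTop monotone_extinctBy) ?_
  simp_rw [Function.comp_def,
    measure_extinctBy (Set.Ioo_subset_Icc_self h0) (Set.Ioo_subset_Icc_self h1) _ P hP]
  exact ENNReal.tendsto_ofReal (tendsto_iterate_offspringPGF h0 h1 hsum)

theorem measure_setOf_gwTree_infinite (hP : IsGWMeasure β₀ β₁ P) (h0 : β₀ ∈ Set.Ioo 0 1)
    (h1 : β₁ ∈ Set.Ioo 0 1) (hsum : 1 ≤ β₀ + β₁) :
    P {ω | (gwTree ω).Infinite} =
      ENNReal.ofReal ((β₀ * β₁ - (1 - β₀) * (1 - β₁)) / (β₀ * β₁)) := by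
  have := hP.1
  have hL : 0 ≤ (1 - β₀) * (1 - β₁) / (β₀ * β₁) :=
    (isLeast_fixedPt_offspringPGF h0 h1 hsum).1.1
  rw [setOf_gwTree_infinite, measure_compl (MeasurableSet.iUnion measurableSet_extinctBy)
    (measure_ne_top P _), measure_univ, measure_iUnion_extinctBy hP h0 h1 hsum,
    ← ENNReal.ofReal_one, ← ENNReal.ofReal_sub _ hL, one_sub_div (mul_pos h0.1 h1.1).ne']

end GaltonWatson

/-- For `β₀, β₁ ∈ (0,1)` with `β₀ + β₁ ≥ 1`, the `P_{β₀,β₁}`-probability that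
the Galton–Watson tree is infinite is `(a₂ - a₃)/a₂ = (β₀ + β₁ - 1)/(β₀ β₁)`, where
`a₂ = β₀β₁` and `a₃ = (1-β₀)(1-β₁)`. -/
theorem stmt7 (β₀ β₁ : ℝ) (h0 : β₀ ∈ Set.Ioo (0 : ℝ) 1) (h1 : β₁ ∈ Set.Ioo (0 : ℝ) 1)
    (hsum : 1 ≤ β₀ + β₁)
    (P : Measure ({σ : List Bool // σ ≠ []} → Bool)) (hP : IsGWMeasure β₀ β₁ P) :
    P {ω | (gwTree ω).Infinite} =
      ENNReal.ofReal ((β₀ * β₁ - (1 - β₀) * (1 - β₁)) / (β₀ * β₁)) ∧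
    (β₀ * β₁ - (1 - β₀) * (1 - β₁)) / (β₀ * β₁) = (β₀ + β₁ - 1) / (β₀ * β₁) :=
  ⟨GaltonWatson.measure_setOf_gwTree_infinite hP h0 h1 hsum, by ring⟩
end

section
/- Let β₀, β₁ ∈ (0,1) with β₀ + β₁ > 1. For every finite binary string σ, the event {ω : σ ∈ Prune(ω)} has positive P_{β₀,β₁}-measure, and P_{β₀,β₁}(σ0 ∈ Prune(ω) and σ1 ∈ Prune(ω) | σ ∈ Prune(ω)) = β₀ + β₁ − 1; that is, the conditional probability that a node of the pruned infinite Galton–Watson tree has two children is β₀ + β₁ − 1. -/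
open MeasureTheory

/-!
Under `P` the coordinates are independent, since the probabilities of the cylinders "all of these
coordinates are `true`" factor, and those cylinders determine a measure on `Coord → Bool`. The law
of a coordinate depends only on its last bit, so the configuration `ω ∘ appendCoord σ` seen from a
node `σ` again has law `P`, and it is independent of the coordinates along `σ`. Hence
`P(σ ∈ Prune) = P(σ ∈ Tree) s` with `s = P(Tree infinite)`, while
`P(σ0, σ1 ∈ Prune) = P(σ ∈ Tree) (β₀ s) (β₁ s)`, and the conditional probability is `β₀ β₁ s`.
The probability that the tree reaches generation `n` is the `n`-th iterate at `1` of
`y ↦ 1 - (1 - β₀ y) (1 - β₁ y)`; these iterates decrease to the largest fixed point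
`s = (β₀ + β₁ - 1) / (β₀ β₁)`, so that `β₀ β₁ s = β₀ + β₁ - 1`.
-/

open ProbabilityTheory MeasurableSpace Filter Topology Set

section BoolValued

variable {ι κ : Type*}

lemma measurableSet_apply_eq_true (i : ι) : MeasurableSet {ω : ι → Bool | ω i = true} :=
  measurableSet_eq_fun (measurable_pi_apply i) measurable_const

def allTrue (S : Finset ι) : Set (ι → Bool) := {ω | ∀ i ∈ S, ω i = true}

lemma allTrue_eq_biInter (S : Finset ι) : allTrue S = ⋂ i ∈ S, {ω | ω i = true} := by
  ext; simp [allTrue]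

lemma measurableSet_allTrue (S : Finset ι) : MeasurableSet (allTrue S) := by
  rw [allTrue_eq_biInter]
  exact .biInter S.countable_toSet fun i _ => measurableSet_apply_eq_true i

lemma isPiSystem_range_allTrue : IsPiSystem (range (allTrue (ι := ι))) := by
  classical
  rintro _ ⟨S, rfl⟩ _ ⟨T, rfl⟩ _
  exact ⟨S ∪ T, by ext; simp [allTrue, or_imp, forall_and]⟩

lemma generateFrom_range_allTrue :
    generateFrom (range (allTrue (ι := ι))) = MeasurableSpace.pi := by
  refine le_antisymm (generateFrom_le ?_) (iSup_le fun i => Measurable.comap_le ?_)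
  · rintro _ ⟨S, rfl⟩
    exact measurableSet_allTrue S
  · exact measurable_to_bool (measurableSet_generateFrom ⟨{i}, by ext; simp [allTrue]⟩)

lemma MeasureTheory.Measure.ext_of_allTrue {μ ν : Measure (ι → Bool)} [IsFiniteMeasure μ]
    (h : ∀ S, μ (allTrue S) = ν (allTrue S)) : μ = ν :=
  ext_of_generate_finite _ generateFrom_range_allTrue.symm isPiSystem_range_allTrue
    (forall_mem_range.2 h) (by simpa [allTrue] using h ∅)

lemma iIndepSet_of_measure_allTrue {μ : Measure (ι → Bool)}
    (h : ∀ S, μ (allTrue S) = ∏ i ∈ S, μ {ω | ω i = true}) :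
    iIndepSet (fun i => {ω : ι → Bool | ω i = true}) μ :=
  (iIndepSet_iff_meas_biInter measurableSet_apply_eq_true).2 fun S => by
    rw [← allTrue_eq_biInter, h]

abbrev coordSigma (S : Set ι) : MeasurableSpace (ι → Bool) :=
  generateFrom {t | ∃ i ∈ S, {ω | ω i = true} = t}

lemma coordSigma_mono : Monotone (coordSigma (ι := ι)) :=
  fun _ _ hST => generateFrom_mono fun _ ⟨i, hi, ht⟩ => ⟨i, hST hi, ht⟩

lemma coordSigma_le_pi (S : Set ι) : coordSigma S ≤ MeasurableSpace.pi :=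
  generateFrom_le fun _ ⟨i, _, ht⟩ => ht ▸ measurableSet_apply_eq_true i

lemma measurable_apply_coordSigma {S : Set ι} {i : ι} (hi : i ∈ S) :
    Measurable[coordSigma S] (fun ω : ι → Bool => ω i) :=
  measurable_to_bool (measurableSet_generateFrom ⟨i, hi, rfl⟩)

lemma measurableSet_allTrue_coordSigma (S : Finset ι) :
    MeasurableSet[coordSigma S] (allTrue S) := by
  rw [allTrue_eq_biInter]
  exact .biInter S.countable_toSet fun i hi =>
    measurableSet_eq_fun (measurable_apply_coordSigma hi) measurable_const

lemma measurable_comp_coordSigma (e : κ → ι) :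
    Measurable[coordSigma (range e)] (fun ω : ι → Bool => ω ∘ e) :=
  @measurable_pi_iff _ _ _ (coordSigma (range e)) _ _ |>.2 fun k =>
    measurable_apply_coordSigma (mem_range_self k)

end BoolValued

abbrev Coord := {σ : List Bool // σ ≠ []}

def appendCoord (σ : List Bool) (τ : Coord) : Coord := ⟨σ ++ τ.1, by simp [τ.2]⟩

lemma appendCoord_injective (σ : List Bool) : Function.Injective (appendCoord σ) :=
  fun _ _ h => Subtype.ext (List.append_cancel_left (congrArg Subtype.val h))

lemma measurable_comp_appendCoord (σ : List Bool) :
    Measurable fun ω : Coord → Bool => ω ∘ appendCoord σ :=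
  measurable_pi_lambda _ fun _ => measurable_pi_apply _

def prefixCoords (σ : List Bool) : Finset Coord := σ.inits.toFinset.subtype (· ≠ [])

lemma mem_prefixCoords {σ : List Bool} {τ : Coord} : τ ∈ prefixCoords σ ↔ τ.1 <+: σ := by
  simp [prefixCoords, List.mem_inits]

section Tree

variable {ω : Coord → Bool} {σ ρ τ : List Bool}

lemma setOf_mem_gwTree (σ : List Bool) : {ω | σ ∈ gwTree ω} = allTrue (prefixCoords σ) := by
  ext; simp [gwTree, allTrue, mem_prefixCoords]

lemma gwTree_mono (h : τ <+: σ) (hσ : σ ∈ gwTree ω) : τ ∈ gwTree ω :=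
  fun ρ hρ => hσ ρ (hρ.trans h)

lemma nil_mem_gwTree : [] ∈ gwTree ω :=
  fun τ hτ => absurd (List.prefix_nil.1 hτ) τ.2

lemma gwPrune_mono (h : τ <+: σ) (hσ : σ ∈ gwPrune ω) : τ ∈ gwPrune ω :=
  ⟨gwTree_mono h hσ.1, hσ.2.mono fun _ hρ => ⟨h.trans hρ.1, hρ.2⟩⟩

lemma append_mem_gwTree_iff (hσ : σ ∈ gwTree ω) :
    σ ++ ρ ∈ gwTree ω ↔ ρ ∈ gwTree (ω ∘ appendCoord σ) := by
  refine ⟨fun h τ hτ => h _ ((List.prefix_append_right_inj σ).2 hτ), fun h π hπ => ?_⟩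
  rcases List.prefix_or_prefix_of_prefix hπ (List.prefix_append σ ρ) with hπσ | ⟨t, ht⟩
  · exact hσ π hπσ
  · rcases eq_or_ne t [] with rfl | htne
    · exact hσ π (by simp [← ht])
    · obtain rfl : π = appendCoord σ ⟨t, htne⟩ := Subtype.ext ht.symm
      exact h ⟨t, htne⟩ ((List.prefix_append_right_inj σ).1 hπ)

lemma append_mem_gwPrune_iff (hσ : σ ∈ gwTree ω) :
    σ ++ ρ ∈ gwPrune ω ↔ ρ ∈ gwPrune (ω ∘ appendCoord σ) := by
  have himage : {τ | σ ++ ρ <+: τ ∧ τ ∈ gwTree ω}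
      = (σ ++ ·) '' {τ | ρ <+: τ ∧ τ ∈ gwTree (ω ∘ appendCoord σ)} := by
    ext τ
    constructor
    · rintro ⟨⟨t, rfl⟩, hτ⟩
      rw [List.append_assoc] at hτ
      exact ⟨ρ ++ t, ⟨List.prefix_append ρ t, (append_mem_gwTree_iff hσ).1 hτ⟩, by simp⟩
    · rintro ⟨τ, ⟨hρτ, hτ⟩, rfl⟩
      exact ⟨(List.prefix_append_right_inj σ).2 hρτ, (append_mem_gwTree_iff hσ).2 hτ⟩
  simp only [gwPrune, mem_ofPred_eq, himage,
    infinite_image_iff (List.append_right_injective σ).injOn, append_mem_gwTree_iff hσ]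

def gwReaches (n : ℕ) : Set (Coord → Bool) := {ω | ∃ τ ∈ gwTree ω, τ.length = n}

lemma gwReaches_zero : gwReaches 0 = univ :=
  eq_univ_of_forall fun _ => ⟨[], nil_mem_gwTree, rfl⟩

lemma gwReaches_antitone : Antitone gwReaches :=
  antitone_nat_of_succ_le fun n _ ⟨τ, hτ, hlen⟩ =>
    ⟨τ.take n, gwTree_mono (List.take_prefix n τ) hτ, by simp [hlen]⟩

lemma measurableSet_gwReaches (n : ℕ) : MeasurableSet (gwReaches n) := by
  have : gwReaches n = ⋃ τ ∈ {τ : List Bool | τ.length = n}, {ω | τ ∈ gwTree ω} := by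
    ext; simp [gwReaches, and_comm]
  rw [this]
  exact .biUnion (to_countable _) fun τ _ => setOf_mem_gwTree τ ▸ measurableSet_allTrue _

lemma infinite_gwTree_iff : (gwTree ω).Infinite ↔ ∀ n, ω ∈ gwReaches n := by
  refine ⟨fun h n => ?_, fun h hfin => ?_⟩
  · by_contra hn
    refine h ((List.finite_length_lt Bool n).subset fun τ hτ => show τ.length < n from ?_)
    by_contra! hlen
    exact hn ⟨τ.take n, gwTree_mono (List.take_prefix n τ) hτ, by simp [hlen]⟩
  · obtain ⟨M, hM⟩ := (hfin.image List.length).bddAbove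
    obtain ⟨τ, hτ, hlen⟩ := h (M + 1)
    have := hM ⟨τ, hτ, hlen⟩
    omega

end Tree

def childEvent (b : Bool) (A : Set (Coord → Bool)) : Set (Coord → Bool) :=
  {ω | [b] ∈ gwTree ω} ∩ (· ∘ appendCoord [b]) ⁻¹' A

lemma cons_mem_gwTree_iff {ω : Coord → Bool} {b : Bool} {ρ : List Bool} :
    b :: ρ ∈ gwTree ω ↔ ω ∈ childEvent b {ω | ρ ∈ gwTree ω} :=
  ⟨fun h => have hb := gwTree_mono (List.prefix_append [b] ρ) h
      ⟨hb, (append_mem_gwTree_iff hb).1 h⟩,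
    fun ⟨hb, h⟩ => (append_mem_gwTree_iff hb).2 h⟩

lemma gwReaches_succ (n : ℕ) :
    gwReaches (n + 1) = childEvent false (gwReaches n) ∪ childEvent true (gwReaches n) := by
  ext ω
  rw [mem_union, ← Bool.exists_bool (p := fun b => ω ∈ childEvent b (gwReaches n))]
  constructor
  · rintro ⟨_ | ⟨b, ρ⟩, hτ, hlen⟩
    · simp at hlen
    · obtain ⟨hb, hρ⟩ := cons_mem_gwTree_iff.1 hτ
      exact ⟨b, hb, ρ, hρ, by simpa using hlen⟩
  · rintro ⟨b, hb, ρ, hρ, hlen⟩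
    exact ⟨b :: ρ, cons_mem_gwTree_iff.2 ⟨hb, hρ⟩, by simp [hlen]⟩

lemma setOf_append_mem_gwPrune (σ ρ : List Bool) :
    {ω | σ ++ ρ ∈ gwPrune ω}
      = {ω | σ ∈ gwTree ω} ∩ (· ∘ appendCoord σ) ⁻¹' {ω | ρ ∈ gwPrune ω} := by
  ext ω
  refine ⟨fun h => ?_, fun ⟨hσ, h⟩ => (append_mem_gwPrune_iff hσ).2 h⟩
  have hσ := gwTree_mono (List.prefix_append σ ρ) h.1
  exact ⟨hσ, (append_mem_gwPrune_iff hσ).1 h⟩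

lemma setOf_singleton_mem_gwPrune (b : Bool) :
    {ω | [b] ∈ gwPrune ω} = childEvent b {ω | [] ∈ gwPrune ω} :=
  setOf_append_mem_gwPrune [b] []

lemma setOf_nil_mem_gwPrune : {ω | [] ∈ gwPrune ω} = ⋂ n, gwReaches n := by
  ext ω
  simp [gwPrune, nil_mem_gwTree, ← infinite_gwTree_iff]

lemma measurableSet_setOf_mem_gwPrune (σ : List Bool) :
    MeasurableSet {ω : Coord → Bool | σ ∈ gwPrune ω} := by
  rw [← List.append_nil σ, setOf_append_mem_gwPrune, setOf_mem_gwTree, setOf_nil_mem_gwPrune]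
  exact (measurableSet_allTrue _).inter
    (measurable_comp_appendCoord σ (.iInter measurableSet_gwReaches))

lemma measurableSet_childEvent (b : Bool) {A : Set (Coord → Bool)} (hA : MeasurableSet A) :
    MeasurableSet[coordSigma {τ : Coord | [b] <+: τ.1}] (childEvent b A) := by
  refine .inter ?_ ?_
  · rw [setOf_mem_gwTree]
    refine coordSigma_mono (fun τ hτ => ?_) _ (measurableSet_allTrue_coordSigma _)
    exact List.prefix_of_prefix_length_le (List.prefix_refl _) (mem_prefixCoords.1 hτ)
      (List.length_pos_iff.2 τ.2)
  · refine coordSigma_mono ?_ _ (measurable_comp_coordSigma _ hA)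
    rintro _ ⟨ρ, rfl⟩
    exact List.prefix_append _ _

section GWMeasure

variable {β₀ β₁ : ℝ} {P : Measure (Coord → Bool)}

lemma gwP_appendCoord (σ : List Bool) (τ : Coord) (b : Bool) :
    gwP β₀ β₁ (appendCoord σ τ) b = gwP β₀ β₁ τ b := by
  simp only [gwP, appendCoord, List.getLast_append_of_ne_nil _ τ.2]

lemma gwP_true_pos (hβ₀ : 0 < β₀) (hβ₁ : 0 < β₁) (σ : Coord) : 0 < gwP β₀ β₁ σ true := by
  rw [gwP, if_pos rfl]
  split_ifs <;> assumption

lemma IsGWMeasure.measure_allTrue (hP : IsGWMeasure β₀ β₁ P) (S : Finset Coord) :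
    P (allTrue S) = ENNReal.ofReal (∏ σ ∈ S, gwP β₀ β₁ σ true) :=
  hP.2 S fun _ => true

lemma IsGWMeasure.iIndepSet_coord (hβ₀ : 0 < β₀) (hβ₁ : 0 < β₁) (hP : IsGWMeasure β₀ β₁ P) :
    iIndepSet (fun σ => {ω : Coord → Bool | ω σ = true}) P := by
  refine iIndepSet_of_measure_allTrue fun S => ?_
  have hcoord (σ : Coord) : P {ω | ω σ = true} = ENNReal.ofReal (gwP β₀ β₁ σ true) := by
    simpa [allTrue] using hP.measure_allTrue {σ}
  simp only [hP.measure_allTrue, hcoord,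
    ENNReal.ofReal_prod_of_nonneg fun σ _ => (gwP_true_pos hβ₀ hβ₁ σ).le]

lemma IsGWMeasure.indep_coordSigma (hβ₀ : 0 < β₀) (hβ₁ : 0 < β₁) (hP : IsGWMeasure β₀ β₁ P)
    {S T : Set Coord} (hST : Disjoint S T) : Indep (coordSigma S) (coordSigma T) P :=
  (hP.iIndepSet_coord hβ₀ hβ₁).indep_generateFrom_of_disjoint measurableSet_apply_eq_true S T hST

/-- The law of a coordinate only depends on its last bit, which `appendCoord σ` does not change. -/
lemma IsGWMeasure.map_comp_appendCoord (hP : IsGWMeasure β₀ β₁ P) (σ : List Bool) :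
    P.map (· ∘ appendCoord σ) = P := by
  have := hP.1
  refine Measure.ext_of_allTrue fun S => ?_
  have hpre : (· ∘ appendCoord σ) ⁻¹' allTrue S
      = allTrue (S.map ⟨appendCoord σ, appendCoord_injective σ⟩) := by
    ext ω
    simp only [allTrue, mem_preimage, mem_ofPred_eq, Finset.forall_mem_map, Function.comp_apply,
      Function.Embedding.coeFn_mk]
  rw [Measure.map_apply (measurable_comp_appendCoord σ) (measurableSet_allTrue S), hpre,
    hP.measure_allTrue, hP.measure_allTrue, Finset.prod_map]
  simp only [Function.Embedding.coeFn_mk, gwP_appendCoord]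

lemma IsGWMeasure.measure_mem_gwTree_inter_preimage (hβ₀ : 0 < β₀) (hβ₁ : 0 < β₁)
    (hP : IsGWMeasure β₀ β₁ P) (σ : List Bool) {A : Set (Coord → Bool)} (hA : MeasurableSet A) :
    P ({ω | σ ∈ gwTree ω} ∩ (· ∘ appendCoord σ) ⁻¹' A) = P {ω | σ ∈ gwTree ω} * P A := by
  have hdisj : Disjoint (prefixCoords σ : Set Coord) (range (appendCoord σ)) := by
    refine Set.disjoint_left.2 ?_
    rintro _ hτ ⟨ρ, rfl⟩
    have hlen := (mem_prefixCoords.1 hτ).length_le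
    have hρ := List.length_pos_iff.2 ρ.2
    simp only [appendCoord, List.length_append] at hlen
    omega
  rw [(Indep_iff _ _ _).1 (hP.indep_coordSigma hβ₀ hβ₁ hdisj) _ _
      (setOf_mem_gwTree σ ▸ measurableSet_allTrue_coordSigma _) (measurable_comp_coordSigma _ hA),
    ← Measure.map_apply (measurable_comp_appendCoord σ) hA, hP.map_comp_appendCoord]

lemma IsGWMeasure.measure_childEvent (hβ₀ : 0 < β₀) (hβ₁ : 0 < β₁) (hP : IsGWMeasure β₀ β₁ P)
    (b : Bool) {A : Set (Coord → Bool)} (hA : MeasurableSet A) :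
    P (childEvent b A) = ENNReal.ofReal (cond b β₁ β₀) * P A := by
  rw [childEvent, hP.measure_mem_gwTree_inter_preimage hβ₀ hβ₁ _ hA, setOf_mem_gwTree,
    hP.measure_allTrue]
  have hprefix : prefixCoords [b] = {⟨[b], List.cons_ne_nil b []⟩} := by
    ext τ
    simp [mem_prefixCoords, List.prefix_cons_iff, Subtype.ext_iff, τ.2]
  cases b <;> simp [hprefix, gwP]

lemma IsGWMeasure.measure_childEvent_inter (hβ₀ : 0 < β₀) (hβ₁ : 0 < β₁)
    (hP : IsGWMeasure β₀ β₁ P) {A B : Set (Coord → Bool)} (hA : MeasurableSet A)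
    (hB : MeasurableSet B) :
    P (childEvent false A ∩ childEvent true B)
      = P (childEvent false A) * P (childEvent true B) := by
  have hdisj : Disjoint {τ : Coord | [false] <+: τ.1} {τ | [true] <+: τ.1} := by
    refine Set.disjoint_left.2 fun τ h₀ h₁ => ?_
    simpa using List.prefix_of_prefix_length_le h₀ h₁ le_rfl
  exact (Indep_iff _ _ _).1 (hP.indep_coordSigma hβ₀ hβ₁ hdisj) _ _
    (measurableSet_childEvent false hA) (measurableSet_childEvent true hB)

end GWMeasure

section Survival

variable (β₀ β₁ : ℝ)

/-- If the subtree above each child survives with probability `y`, the node has a surviving child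
with probability `survivalStep β₀ β₁ y`. -/
def survivalStep (y : ℝ) : ℝ := 1 - (1 - β₀ * y) * (1 - β₁ * y)

noncomputable def survivalProb : ℝ := (β₀ + β₁ - 1) / (β₀ * β₁)

variable {β₀ β₁} (h0 : β₀ ∈ Ioo (0 : ℝ) 1) (h1 : β₁ ∈ Ioo (0 : ℝ) 1)
include h0 h1

lemma mul_survivalProb : β₀ * β₁ * survivalProb β₀ β₁ = β₀ + β₁ - 1 :=
  mul_div_cancel₀ _ (mul_pos h0.1 h1.1).ne'

lemma survivalStep_sub_self (y : ℝ) :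
    survivalStep β₀ β₁ y - y = β₀ * β₁ * y * (survivalProb β₀ β₁ - y) := by
  unfold survivalStep
  linear_combination (-y) * mul_survivalProb h0 h1

lemma survivalStep_survivalProb : survivalStep β₀ β₁ (survivalProb β₀ β₁) = survivalProb β₀ β₁ := by
  rw [← sub_eq_zero, survivalStep_sub_self h0 h1, sub_self, mul_zero]

lemma survivalProb_le_one : survivalProb β₀ β₁ ≤ 1 := by
  rw [survivalProb, div_le_one (mul_pos h0.1 h1.1)]
  nlinarith [h0.2, h1.2]

lemma survivalStep_mono {x y : ℝ} (hxy : x ≤ y) (hy : y ≤ 1) :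
    survivalStep β₀ β₁ x ≤ survivalStep β₀ β₁ y := by
  have := h0.1; have := h0.2; have := h1.1; have := h1.2
  unfold survivalStep
  nlinarith [mul_le_mul_of_nonneg_left hxy h0.1.le, mul_le_mul_of_nonneg_left hxy h1.1.le,
    mul_le_mul_of_nonneg_left hy h0.1.le, mul_le_mul_of_nonneg_left hy h1.1.le]

lemma iterate_survivalStep_mem_Icc (n : ℕ) :
    (survivalStep β₀ β₁)^[n] 1 ∈ Icc (survivalProb β₀ β₁) 1 := by
  induction n with
  | zero => exact ⟨survivalProb_le_one h0 h1, le_rfl⟩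
  | succ n ih =>
    rw [Function.iterate_succ_apply']
    refine ⟨?_, ?_⟩
    · calc survivalProb β₀ β₁ = survivalStep β₀ β₁ (survivalProb β₀ β₁) :=
            (survivalStep_survivalProb h0 h1).symm
        _ ≤ _ := survivalStep_mono h0 h1 ih.1 ih.2
    · have h₀ : 0 ≤ 1 - β₀ * (survivalStep β₀ β₁)^[n] 1 := by nlinarith [ih.2, h0.2, h0.1]
      have h₁ : 0 ≤ 1 - β₁ * (survivalStep β₀ β₁)^[n] 1 := by nlinarith [ih.2, h1.2, h1.1]
      exact sub_le_self _ (mul_nonneg h₀ h₁)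

variable (hsum : 1 < β₀ + β₁)
include hsum

lemma survivalProb_pos : 0 < survivalProb β₀ β₁ :=
  div_pos (by linarith) (mul_pos h0.1 h1.1)

lemma antitone_iterate_survivalStep : Antitone fun n => (survivalStep β₀ β₁)^[n] 1 := by
  refine antitone_nat_of_succ_le fun n => ?_
  obtain ⟨hs, -⟩ := iterate_survivalStep_mem_Icc h0 h1 n
  rw [Function.iterate_succ_apply', ← sub_nonpos, survivalStep_sub_self h0 h1]
  exact mul_nonpos_of_nonneg_of_nonpos
    (mul_nonneg (mul_pos h0.1 h1.1).le ((survivalProb_pos h0 h1 hsum).le.trans hs))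
    (sub_nonpos.2 hs)

/-- Starting from `1`, the iteration decreases to the largest fixed point, the only positive
one. -/
lemma tendsto_iterate_survivalStep :
    Tendsto (fun n => (survivalStep β₀ β₁)^[n] 1) atTop (𝓝 (survivalProb β₀ β₁)) := by
  have hmem := iterate_survivalStep_mem_Icc h0 h1
  have hlim := tendsto_atTop_ciInf (antitone_iterate_survivalStep h0 h1 hsum)
    ⟨survivalProb β₀ β₁, forall_mem_range.2 fun n => (hmem n).1⟩
  set L := ⨅ n, (survivalStep β₀ β₁)^[n] 1
  have hLpos : 0 < L := (survivalProb_pos h0 h1 hsum).trans_le (le_ciInf fun n => (hmem n).1)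
  have hfix : survivalStep β₀ β₁ L = L :=
    isFixedPt_of_tendsto_iterate hlim (by unfold survivalStep; fun_prop)
  have hzero : β₀ * β₁ * L * (survivalProb β₀ β₁ - L) = 0 := by
    rw [← survivalStep_sub_self h0 h1, hfix, sub_self]
  have hL : survivalProb β₀ β₁ = L :=
    sub_eq_zero.1 ((mul_eq_zero.1 hzero).resolve_left (mul_pos (mul_pos h0.1 h1.1) hLpos).ne')
  exact hL ▸ hlim

end Survival

section Pruned

variable {β₀ β₁ : ℝ} {P : Measure (Coord → Bool)}

lemma IsGWMeasure.measureReal_gwReaches (hβ₀ : 0 < β₀) (hβ₁ : 0 < β₁)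
    (hP : IsGWMeasure β₀ β₁ P) (n : ℕ) :
    P.real (gwReaches n) = (survivalStep β₀ β₁)^[n] 1 := by
  have := hP.1
  induction n with
  | zero => simp [gwReaches_zero]
  | succ n ih =>
    have hA := measurableSet_gwReaches n
    have hchild (b : Bool) :
        P.real (childEvent b (gwReaches n)) = cond b β₁ β₀ * (survivalStep β₀ β₁)^[n] 1 := by
      rw [measureReal_def, hP.measure_childEvent hβ₀ hβ₁ b hA, ENNReal.toReal_mul,
        ← measureReal_def, ih, ENNReal.toReal_ofReal (by cases b <;> positivity)]
    have hinter : P.real (childEvent false (gwReaches n) ∩ childEvent true (gwReaches n))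
        = P.real (childEvent false (gwReaches n)) * P.real (childEvent true (gwReaches n)) := by
      simp only [measureReal_def, hP.measure_childEvent_inter hβ₀ hβ₁ hA hA, ENNReal.toReal_mul]
    have hunion := measureReal_union_add_inter (μ := P) (s := childEvent false (gwReaches n))
      (coordSigma_le_pi _ _ (measurableSet_childEvent true hA))
    rw [hinter, hchild, hchild, cond_false, cond_true] at hunion
    rw [Function.iterate_succ_apply', gwReaches_succ, survivalStep]
    linarith

lemma IsGWMeasure.measure_nil_mem_gwPrune (h0 : β₀ ∈ Ioo (0 : ℝ) 1) (h1 : β₁ ∈ Ioo (0 : ℝ) 1)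
    (hsum : 1 < β₀ + β₁) (hP : IsGWMeasure β₀ β₁ P) :
    P {ω | [] ∈ gwPrune ω} = ENNReal.ofReal (survivalProb β₀ β₁) := by
  have := hP.1
  have hreaches : P ∘ gwReaches = fun n => ENNReal.ofReal ((survivalStep β₀ β₁)^[n] 1) := by
    ext1 n
    simp [← hP.measureReal_gwReaches h0.1 h1.1]
  rw [setOf_nil_mem_gwPrune]
  refine tendsto_nhds_unique (tendsto_measure_iInter_atTop
    (fun n => (measurableSet_gwReaches n).nullMeasurableSet) gwReaches_antitone
    ⟨0, measure_ne_top _ _⟩) ?_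
  rw [hreaches]
  exact (ENNReal.continuous_ofReal.tendsto _).comp (tendsto_iterate_survivalStep h0 h1 hsum)

lemma IsGWMeasure.measure_mem_gwPrune (h0 : β₀ ∈ Ioo (0 : ℝ) 1) (h1 : β₁ ∈ Ioo (0 : ℝ) 1)
    (hsum : 1 < β₀ + β₁) (hP : IsGWMeasure β₀ β₁ P) (σ : List Bool) :
    P {ω | σ ∈ gwPrune ω} = P {ω | σ ∈ gwTree ω} * ENNReal.ofReal (survivalProb β₀ β₁) := by
  rw [← hP.measure_nil_mem_gwPrune h0 h1 hsum, ← hP.measure_mem_gwTree_inter_preimage h0.1 h1.1 σ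
    (measurableSet_setOf_mem_gwPrune []), ← setOf_append_mem_gwPrune, List.append_nil]

lemma IsGWMeasure.measure_mem_gwPrune_pos (h0 : β₀ ∈ Ioo (0 : ℝ) 1) (h1 : β₁ ∈ Ioo (0 : ℝ) 1)
    (hsum : 1 < β₀ + β₁) (hP : IsGWMeasure β₀ β₁ P) (σ : List Bool) :
    0 < P {ω | σ ∈ gwPrune ω} := by
  rw [hP.measure_mem_gwPrune h0 h1 hsum, setOf_mem_gwTree, hP.measure_allTrue]
  exact ENNReal.mul_pos
    (ENNReal.ofReal_pos.2 (Finset.prod_pos fun τ _ => gwP_true_pos h0.1 h1.1 τ)).ne'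
    (ENNReal.ofReal_pos.2 (survivalProb_pos h0 h1 hsum)).ne'

lemma IsGWMeasure.measure_children_mem_gwPrune (h0 : β₀ ∈ Ioo (0 : ℝ) 1)
    (h1 : β₁ ∈ Ioo (0 : ℝ) 1) (hsum : 1 < β₀ + β₁) (hP : IsGWMeasure β₀ β₁ P) (σ : List Bool) :
    P {ω | σ ++ [false] ∈ gwPrune ω ∧ σ ++ [true] ∈ gwPrune ω}
      = P {ω | σ ∈ gwPrune ω} * ENNReal.ofReal (β₀ + β₁ - 1) := by
  have hchildren : {ω | σ ++ [false] ∈ gwPrune ω ∧ σ ++ [true] ∈ gwPrune ω}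
      = {ω | σ ∈ gwTree ω} ∩ (· ∘ appendCoord σ) ⁻¹'
        (childEvent false {ω | [] ∈ gwPrune ω} ∩ childEvent true {ω | [] ∈ gwPrune ω}) := by
    rw [ofPred_and, setOf_append_mem_gwPrune, setOf_append_mem_gwPrune,
      ← inter_inter_distrib_left, ← preimage_inter, setOf_singleton_mem_gwPrune,
      setOf_singleton_mem_gwPrune]
  have hnil := measurableSet_setOf_mem_gwPrune []
  rw [hchildren, hP.measure_mem_gwTree_inter_preimage h0.1 h1.1 σ
      ((coordSigma_le_pi _ _ (measurableSet_childEvent false hnil)).inter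
        (coordSigma_le_pi _ _ (measurableSet_childEvent true hnil))),
    hP.measure_childEvent_inter h0.1 h1.1 hnil hnil, hP.measure_childEvent h0.1 h1.1 _ hnil,
    hP.measure_childEvent h0.1 h1.1 _ hnil, hP.measure_nil_mem_gwPrune h0 h1 hsum,
    hP.measure_mem_gwPrune h0 h1 hsum σ, ← mul_survivalProb h0 h1,
    ENNReal.ofReal_mul (mul_pos h0.1 h1.1).le, ENNReal.ofReal_mul h0.1.le, cond_false, cond_true]
  ring

end Pruned

/-- For `β₀, β₁ ∈ (0,1)` with `β₀ + β₁ > 1` and every finite binary string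
`σ`: the event `σ ∈ Prune(ω)` has positive `P_{β₀,β₁}`-measure, and the conditional
probability, given `σ ∈ Prune(ω)`, that both children `σ0` and `σ1` are in `Prune(ω)` is
`β₀ + β₁ - 1`. -/
theorem stmt8 (β₀ β₁ : ℝ) (h0 : β₀ ∈ Set.Ioo (0 : ℝ) 1) (h1 : β₁ ∈ Set.Ioo (0 : ℝ) 1)
    (hsum : 1 < β₀ + β₁)
    (P : Measure ({σ : List Bool // σ ≠ []} → Bool)) (hP : IsGWMeasure β₀ β₁ P)
    (σ : List Bool) :
    0 < P {ω | σ ∈ gwPrune ω} ∧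
    ProbabilityTheory.cond P {ω | σ ∈ gwPrune ω}
        {ω | σ ++ [false] ∈ gwPrune ω ∧ σ ++ [true] ∈ gwPrune ω} =
      ENNReal.ofReal (β₀ + β₁ - 1) := by
  have := hP.1
  have hpos := hP.measure_mem_gwPrune_pos h0 h1 hsum σ
  have hsub : {ω | σ ++ [false] ∈ gwPrune ω ∧ σ ++ [true] ∈ gwPrune ω} ⊆ {ω | σ ∈ gwPrune ω} :=
    fun _ h => gwPrune_mono (List.prefix_append σ _) h.1
  refine ⟨hpos, ?_⟩
  rw [cond_apply (measurableSet_setOf_mem_gwPrune σ), inter_eq_right.2 hsub,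
    hP.measure_children_mem_gwPrune h0 h1 hsum, ← mul_assoc,
    ENNReal.inv_mul_cancel hpos.ne' (measure_ne_top _ _), one_mul]
end

section
/- Let β₀, β₁ ∈ (0,1) be reals with β₀ + β₁ ≥ 1, and set a₀ = β₀(1−β₁), a₁ = β₁(1−β₀), a₂ = β₀β₁, a₃ = (1−β₀)(1−β₁). Let r : ℕ → ℝ satisfy r₀ = 1 and r_{n+1} = a₀·rₙ + a₁·rₙ + a₂·(2rₙ − rₙ²) for all n. Then rₙ > (a₂ − a₃)/a₂ for every n ∈ ℕ. -/
/-- For `β₀, β₁ ∈ (0,1)` with `β₀ + β₁ ≥ 1`, set `a₀ = β₀(1-β₁)`,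
`a₁ = β₁(1-β₀)`, `a₂ = β₀β₁`, `a₃ = (1-β₀)(1-β₁)`. If `r₀ = 1` and
`r_{n+1} = a₀ rₙ + a₁ rₙ + a₂ (2rₙ - rₙ²)` for all `n`, then `rₙ > (a₂ - a₃)/a₂` for all `n`. -/
theorem stmt12 (β₀ β₁ : ℝ) (h0 : β₀ ∈ Set.Ioo (0 : ℝ) 1) (h1 : β₁ ∈ Set.Ioo (0 : ℝ) 1)
    (hsum : 1 ≤ β₀ + β₁) (r : ℕ → ℝ) (hr0 : r 0 = 1)
    (hrec : ∀ n : ℕ, r (n + 1) =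
      β₀ * (1 - β₁) * r n + β₁ * (1 - β₀) * r n + β₀ * β₁ * (2 * r n - (r n) ^ 2)) :
    ∀ n : ℕ, (β₀ * β₁ - (1 - β₀) * (1 - β₁)) / (β₀ * β₁) < r n := by
  obtain ⟨hb0, hb0'⟩ := h0
  obtain ⟨hb1, hb1'⟩ := h1
  have ha2 : 0 < β₀ * β₁ := mul_pos hb0 hb1
  have key : ∀ n : ℕ, β₀ * β₁ - (1 - β₀) * (1 - β₁) < β₀ * β₁ * r n ∧ r n ≤ 1 := by
    intro n
    induction n with
    | zero =>
        rw [hr0]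
        constructor
        · nlinarith [mul_pos (sub_pos.mpr hb0') (sub_pos.mpr hb1')]
        · exact le_refl 1
    | succ n ih =>
        obtain ⟨hlo, hhi⟩ := ih
        rw [hrec n]
        constructor
        · nlinarith [mul_pos (sub_pos.mpr hlo |> fun h => h)
            (show (0:ℝ) < 1 - β₀ * β₁ * r n by nlinarith)]
        · nlinarith [mul_pos (sub_pos.mpr hb0') (sub_pos.mpr hb1'),
            sq_nonneg (1 - r n), mul_nonneg (mul_nonneg hb0.le (sub_pos.mpr hb1').le)
              (sub_nonneg.mpr hhi),
            mul_nonneg (mul_nonneg hb1.le (sub_pos.mpr hb0').le) (sub_nonneg.mpr hhi),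
            mul_nonneg (mul_nonneg hb0.le hb1.le) (sq_nonneg (1 - r n))]
  intro n
  rw [div_lt_iff₀ ha2]
  linarith [(key n).1]
end

section
/- Let β₀, β₁ ∈ (0,1) be reals with β₀ + β₁ ≥ 1, and set a₀ = β₀(1−β₁), a₁ = β₁(1−β₀), a₂ = β₀β₁, a₃ = (1−β₀)(1−β₁). Let r : ℕ → ℝ satisfy r₀ = 1 and r_{n+1} = a₀·rₙ + a₁·rₙ + a₂·(2rₙ − rₙ²) for all n. Then the sequence (rₙ) converges, with limit (a₂ − a₃)/a₂ = (β₀ + β₁ − 1)/(β₀β₁). -/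
/-!
Writing `s = β₀ + β₁` and `p = β₀β₁`, the recursion is `r (n+1) = f (r n)` for the quadratic map
`f x = s x - p x²`, whose fixed points are `0` and `L = (s - 1)/p ∈ [0, 1]`. From
`f x - x = -p x (x - L)` and `f x - L = (x - L)(1 - p x)`, the map sends `[L, 1]` into itself and
lies below the identity there, so the orbit of `1` decreases to a fixed point in `[L, 1]`,
which can only be `L`.
-/

open Filter Function Set Topology

def survivalMap (s p x : ℝ) : ℝ := s * x - p * x ^ 2

namespace survivalMap

variable {s p L : ℝ}

lemma continuous : Continuous (survivalMap s p) := by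
  unfold survivalMap; fun_prop

lemma sub_self (hL : p * L = s - 1) (x : ℝ) : survivalMap s p x - x = -(p * x * (x - L)) := by
  unfold survivalMap; linear_combination -x * hL

lemma sub_fixedPoint (hL : p * L = s - 1) (x : ℝ) :
    survivalMap s p x - L = (x - L) * (1 - p * x) := by
  unfold survivalMap; linear_combination -x * hL

lemma le_self (hL : p * L = s - 1) (hp : 0 ≤ p) {x : ℝ} (hx : 0 ≤ x) (hLx : L ≤ x) :
    survivalMap s p x ≤ x := by
  have := sub_self hL x
  nlinarith [mul_nonneg (mul_nonneg hp hx) (sub_nonneg.2 hLx)]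

lemma mapsTo_Icc (hL : p * L = s - 1) (hL₀ : 0 ≤ L) (hp₀ : 0 ≤ p) (hp₁ : p ≤ 1) :
    MapsTo (survivalMap s p) (Icc L 1) (Icc L 1) := by
  rintro x ⟨hLx, hx1⟩
  have hpx : p * x ≤ 1 := by nlinarith
  have := sub_fixedPoint hL x
  refine ⟨by nlinarith [mul_nonneg (sub_nonneg.2 hLx) (sub_nonneg.2 hpx)], ?_⟩
  exact (le_self hL hp₀ (hL₀.trans hLx) hLx).trans hx1

lemma isFixedPt_iff (hL : p * L = s - 1) (hp : p ≠ 0) {c : ℝ} :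
    IsFixedPt (survivalMap s p) c ↔ c = 0 ∨ c = L := by
  rw [IsFixedPt, ← sub_eq_zero, sub_self hL, neg_eq_zero]
  simp [hp, sub_eq_zero]

theorem tendsto_iterate (hL : p * L = s - 1) (hL₀ : 0 ≤ L) (hp₀ : 0 < p) (hp₁ : p ≤ 1)
    {x : ℝ} (hx : x ∈ Icc L 1) :
    Tendsto (fun n => (survivalMap s p)^[n] x) atTop (𝓝 L) := by
  set u := fun n => (survivalMap s p)^[n] x
  have hmem : ∀ n, u n ∈ Icc L 1 := fun n => (mapsTo_Icc hL hL₀ hp₀.le hp₁).iterate n hx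
  have hanti : Antitone u := antitone_nat_of_succ_le fun n => by
    simp only [u, iterate_succ_apply']
    exact le_self hL hp₀.le (hL₀.trans (hmem n).1) (hmem n).1
  have hbdd : BddBelow (range u) := ⟨L, forall_mem_range.2 fun n => (hmem n).1⟩
  have hlim := tendsto_atTop_ciInf hanti hbdd
  have hLc : L ≤ ⨅ n, u n := le_ciInf fun n => (hmem n).1
  have hfix := isFixedPt_of_tendsto_iterate hlim continuous.continuousAt
  rcases (isFixedPt_iff hL hp₀.ne').1 hfix with hc | hc
  · rwa [le_antisymm (hc ▸ hLc) hL₀, ← hc]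
  · rwa [← hc]

end survivalMap

/-- For `β₀, β₁ ∈ (0,1)` with `β₀ + β₁ ≥ 1`, set `a₀ = β₀(1-β₁)`,
`a₁ = β₁(1-β₀)`, `a₂ = β₀β₁`, `a₃ = (1-β₀)(1-β₁)`. If `r₀ = 1` and
`r_{n+1} = a₀ rₙ + a₁ rₙ + a₂ (2rₙ - rₙ²)` for all `n`, then `(rₙ)` converges with limit
`(a₂ - a₃)/a₂ = (β₀ + β₁ - 1)/(β₀β₁)`. -/
theorem stmt13 (β₀ β₁ : ℝ) (h0 : β₀ ∈ Set.Ioo (0 : ℝ) 1) (h1 : β₁ ∈ Set.Ioo (0 : ℝ) 1)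
    (hsum : 1 ≤ β₀ + β₁) (r : ℕ → ℝ) (hr0 : r 0 = 1)
    (hrec : ∀ n : ℕ, r (n + 1) =
      β₀ * (1 - β₁) * r n + β₁ * (1 - β₀) * r n + β₀ * β₁ * (2 * r n - (r n) ^ 2)) :
    Filter.Tendsto r Filter.atTop
      (nhds ((β₀ * β₁ - (1 - β₀) * (1 - β₁)) / (β₀ * β₁))) ∧
    (β₀ * β₁ - (1 - β₀) * (1 - β₁)) / (β₀ * β₁) = (β₀ + β₁ - 1) / (β₀ * β₁) := by
  obtain ⟨hβ₀, hβ₀'⟩ := h0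
  obtain ⟨hβ₁, hβ₁'⟩ := h1
  have hp : 0 < β₀ * β₁ := mul_pos hβ₀ hβ₁
  set L := (β₀ + β₁ - 1) / (β₀ * β₁)
  have hL : β₀ * β₁ * L = β₀ + β₁ - 1 := mul_div_cancel₀ _ hp.ne'
  have hL₁ : L ≤ 1 := (div_le_one hp).2 (by nlinarith)
  have hr : r = fun n => (survivalMap (β₀ + β₁) (β₀ * β₁))^[n] 1 := by
    funext n
    induction n with
    | zero => exact hr0
    | succ n ih => rw [hrec, iterate_succ_apply', ← ih, survivalMap]; ring
  have hlimit : (β₀ * β₁ - (1 - β₀) * (1 - β₁)) / (β₀ * β₁) = L := by ring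
  rw [hlimit, hr]
  exact ⟨survivalMap.tendsto_iterate hL (div_nonneg (by linarith) hp.le)
    hp (by nlinarith) ⟨hL₁, le_rfl⟩, rfl⟩
end
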